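/- arXiv:1003.1431 — 6 statements merged into one kernel-verified Lean document; each statement's English description precedes it below -/
import Mathlib

section
/- Let f and g be nonzero rational functions in ℂ(t). For a point p ∈ ℂ let ord_p denote the order of vanishing of a rational function at p, and let ord_∞ h := (degree of the denominator of h) − (degree of the numerator of h). For each p ∈ ℂ ∪ {∞} define the tame symbol d_p(f,g) := (−1)^{ord_p(f)·ord_p(g)} times the value at p of the rational function f^{ord_p(g)}/g^{ord_p(f)} (this rational function has neither a zero nor a pole at p, so the value is a nonzero complex number). Then d_p(f,g) = 1 for all but finitely many p, and the product over all p ∈ ℂ ∪ {∞} of d_p(f,g) equals 1. -/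
open Polynomial

/-- Order of vanishing of a rational function at a finite point `p ∈ ℂ`:
the multiplicity of `(t - p)` (positive for zeros, negative for poles). -/
noncomputable def ordAt (p : ℂ) (h : RatFunc ℂ) : ℤ :=
  (h.num.rootMultiplicity p : ℤ) - (h.denom.rootMultiplicity p : ℤ)

/-- Order of vanishing at infinity: degree of denominator minus degree of numerator. -/
noncomputable def ordInf (h : RatFunc ℂ) : ℤ :=
  (h.denom.natDegree : ℤ) - (h.num.natDegree : ℤ)

/-- Value at infinity of a rational function having neither zero nor pole at infinity:
the ratio of the leading coefficients. -/
noncomputable def evalInf (h : RatFunc ℂ) : ℂ :=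
  h.num.leadingCoeff / h.denom.leadingCoeff

/-- The tame symbol of `f` and `g` at a finite point `p ∈ ℂ`. -/
noncomputable def tameSymbolAt (p : ℂ) (f g : RatFunc ℂ) : ℂ :=
  (-1 : ℂ) ^ (ordAt p f * ordAt p g) *
    RatFunc.eval (RingHom.id ℂ) p (f ^ (ordAt p g) / g ^ (ordAt p f))

/-- The tame symbol of `f` and `g` at the point at infinity. -/
noncomputable def tameSymbolInf (f g : RatFunc ℂ) : ℂ :=
  (-1 : ℂ) ^ (ordInf f * ordInf g) * evalInf (f ^ (ordInf g) / g ^ (ordInf f))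

/-!
At every point of `ℂ ∪ {∞}` the tame symbol depends only on the orders `m, n` and on the leading
Laurent coefficients `a, b` of `f` and `g` there: it is `(-1)^(mn) a^n / b^m`, because
`f^n / g^m` has order `0`, so its value is its leading coefficient. Orders add and leading
coefficients multiply, so the product `Φ(f, g)` of all tame symbols is multiplicative in `f`
and satisfies `Φ(f, g) Φ(g, f) = 1`. As `ℂ` is algebraically closed, nonzero rational functions
are products of constants and of the `t - a` and their inverses, and on such pairs `Φ = 1` is a
direct computation; e.g. for `t - a, t - b` with `a ≠ b` the only symbols different from `1` are
`1 / (a - b)` at `a`, `b - a` at `b` and `-1` at `∞`.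
-/

section Field

variable {K : Type*} [Field K]

noncomputable def taylorTrailingCoeff (p : K) : K[X] →*₀ K where
  toFun P := (taylor p P).trailingCoeff
  map_zero' := by simp
  map_one' := by simp [trailingCoeff]
  map_mul' P Q := by simp only [taylor_mul, trailingCoeff_mul]

lemma taylorTrailingCoeff_ne_zero (p : K) {P : K[X]} (hP : P ≠ 0) :
    taylorTrailingCoeff p P ≠ 0 := by
  simpa [taylorTrailingCoeff] using hP

lemma taylorTrailingCoeff_of_rootMultiplicity_eq_zero {p : K} {P : K[X]}
    (hP : P.rootMultiplicity p = 0) : taylorTrailingCoeff p P = P.eval p := by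
  have h0 : (taylor p P).natTrailingDegree = 0 := by
    rw [taylor_apply, ← rootMultiplicity_eq_natTrailingDegree, hP]
  rw [← taylor_coeff_zero, ← h0]
  rfl

noncomputable def leadingCoeffHom₀ : K[X] →*₀ K :=
  { (leadingCoeffHom : K[X] →* K) with map_zero' := leadingCoeff_zero }

/-- The leading coefficient `a` of the Laurent expansion `h = a (t - p)^m + ⋯` at `p`. -/
noncomputable def leadingCoeffAt (p : K) : RatFunc K →*₀ K :=
  RatFunc.liftMonoidWithZeroHom (taylorTrailingCoeff p) fun _ hP =>
    mem_nonZeroDivisors_of_ne_zero (taylorTrailingCoeff_ne_zero p (nonZeroDivisors.ne_zero hP))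

/-- The leading coefficient `a` of the Laurent expansion `h = a t^(-m) + ⋯` at `∞`. -/
noncomputable def leadingCoeffInf : RatFunc K →*₀ K :=
  RatFunc.liftMonoidWithZeroHom leadingCoeffHom₀ fun _ hP =>
    mem_nonZeroDivisors_of_ne_zero (leadingCoeff_ne_zero.2 (nonZeroDivisors.ne_zero hP))

lemma leadingCoeffAt_apply (p : K) (h : RatFunc K) :
    leadingCoeffAt p h = taylorTrailingCoeff p h.num / taylorTrailingCoeff p h.denom := by
  conv_lhs => rw [← RatFunc.num_div_denom h]
  exact RatFunc.liftMonoidWithZeroHom_apply_div _ _ _ _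

lemma leadingCoeffInf_apply (h : RatFunc K) :
    leadingCoeffInf h = h.num.leadingCoeff / h.denom.leadingCoeff := by
  conv_lhs => rw [← RatFunc.num_div_denom h]
  exact RatFunc.liftMonoidWithZeroHom_apply_div _ _ _ _

lemma leadingCoeffAt_algebraMap (p : K) (P : K[X]) :
    leadingCoeffAt p (algebraMap K[X] (RatFunc K) P) = taylorTrailingCoeff p P := by
  simp [leadingCoeffAt_apply]

lemma leadingCoeffInf_algebraMap (P : K[X]) :
    leadingCoeffInf (algebraMap K[X] (RatFunc K) P) = P.leadingCoeff := by
  simp [leadingCoeffInf_apply]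

lemma algebraMap_X_sub_C (a : K) :
    algebraMap K[X] (RatFunc K) (X - C a) = RatFunc.X - RatFunc.C a := by
  rw [map_sub, RatFunc.algebraMap_X, RatFunc.algebraMap_C]

lemma RatFunc.X_sub_C_ne_zero (a : K) : RatFunc.X - RatFunc.C a ≠ 0 := by
  rw [← algebraMap_X_sub_C]
  exact RatFunc.algebraMap_ne_zero (Polynomial.X_sub_C_ne_zero a)

lemma leadingCoeffAt_C (p c : K) : leadingCoeffAt p (RatFunc.C c) = c := by
  rw [← RatFunc.algebraMap_C, leadingCoeffAt_algebraMap]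
  simp [taylorTrailingCoeff, trailingCoeff]

lemma leadingCoeffAt_X_sub_C_self (a : K) : leadingCoeffAt a (RatFunc.X - RatFunc.C a) = 1 := by
  rw [← algebraMap_X_sub_C, leadingCoeffAt_algebraMap]
  simp [taylorTrailingCoeff, trailingCoeff]

lemma leadingCoeffAt_X_sub_C_of_ne {p a : K} (h : p ≠ a) :
    leadingCoeffAt p (RatFunc.X - RatFunc.C a) = p - a := by
  rw [← algebraMap_X_sub_C, leadingCoeffAt_algebraMap,
    taylorTrailingCoeff_of_rootMultiplicity_eq_zero, eval_sub, eval_X, eval_C]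
  exact rootMultiplicity_eq_zero fun hr => h (root_X_sub_C.1 hr).symm

lemma leadingCoeffInf_C (c : K) : leadingCoeffInf (RatFunc.C c) = c := by
  rw [← RatFunc.algebraMap_C, leadingCoeffInf_algebraMap, leadingCoeff_C]

lemma leadingCoeffInf_X_sub_C (a : K) : leadingCoeffInf (RatFunc.X - RatFunc.C a) = 1 := by
  rw [← algebraMap_X_sub_C, leadingCoeffInf_algebraMap, leadingCoeff_X_sub_C]

lemma RatFunc.rootMultiplicity_num_eq_zero_or_denom (h : RatFunc K) (p : K) :
    h.num.rootMultiplicity p = 0 ∨ h.denom.rootMultiplicity p = 0 := by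
  by_contra! hboth
  obtain ⟨hnum, hden⟩ := hboth
  obtain ⟨u, v, huv⟩ := h.isCoprime_num_denom
  have hnum' : h.num.eval p = 0 := (rootMultiplicity_pos'.1 (Nat.pos_of_ne_zero hnum)).2
  have hden' : h.denom.eval p = 0 := (rootMultiplicity_pos'.1 (Nat.pos_of_ne_zero hden)).2
  simpa [hnum', hden'] using congrArg (Polynomial.eval p) huv

theorem RatFunc.eq_one_of_map_C_of_map_X_sub_C [IsAlgClosed K] {M : Type*} [Monoid M]
    (φ : RatFunc K → M) (hmul : ∀ f g, f ≠ 0 → g ≠ 0 → φ (f * g) = φ f * φ g)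
    (hC : ∀ c : K, c ≠ 0 → φ (RatFunc.C c) = 1) (hX : ∀ a : K, φ (RatFunc.X - RatFunc.C a) = 1)
    {f : RatFunc K} (hf : f ≠ 0) : φ f = 1 := by
  have hpoly (P : K[X]) (hP : P ≠ 0) : φ (algebraMap K[X] (RatFunc K) P) = 1 := by
    have hroots : (P.roots.map fun a => RatFunc.X - RatFunc.C a).prod ≠ 0 ∧
        φ (P.roots.map fun a => RatFunc.X - RatFunc.C a).prod = 1 := by
      refine Multiset.prod_induction (fun x : RatFunc K => x ≠ 0 ∧ φ x = 1) _ ?_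
        ⟨one_ne_zero, by simpa using hC 1 one_ne_zero⟩ ?_
      · rintro x y ⟨hx0, hx⟩ ⟨hy0, hy⟩
        exact ⟨mul_ne_zero hx0 hy0, by rw [hmul x y hx0 hy0, hx, hy, one_mul]⟩
      · simp only [Multiset.mem_map]
        rintro _ ⟨a, -, rfl⟩
        exact ⟨RatFunc.X_sub_C_ne_zero a, hX a⟩
    have hlc : P.leadingCoeff ≠ 0 := leadingCoeff_ne_zero.2 hP
    rw [(IsAlgClosed.splits P).eq_prod_roots, map_mul, map_multiset_prod, Multiset.map_map,
      Function.comp_def, RatFunc.algebraMap_C]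
    simp only [algebraMap_X_sub_C]
    rw [hmul _ _ ((_root_.map_ne_zero _).2 hlc) hroots.1, hC _ hlc, hroots.2, one_mul]
  have hden : algebraMap K[X] (RatFunc K) f.denom ≠ 0 := RatFunc.algebraMap_ne_zero f.denom_ne_zero
  have hnum := RatFunc.num_div_denom f
  rw [div_eq_iff hden] at hnum
  have := congrArg φ hnum
  rwa [hmul f _ hf hden, hpoly _ (RatFunc.num_ne_zero hf), hpoly _ f.denom_ne_zero, mul_one,
    eq_comm] at this

/-- The tame symbol of functions with orders `m, n` and leading coefficients `a, b`. -/
def localSymbol (m n : ℤ) (a b : K) : K :=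
  (-1) ^ (m * n) * (a ^ n / b ^ m)

lemma localSymbol_add_mul {b : K} (hb : b ≠ 0) (m m' n : ℤ) (a a' : K) :
    localSymbol (m + m') n (a * a') b = localSymbol m n a b * localSymbol m' n a' b := by
  simp only [localSymbol, add_mul, zpow_add₀ (by norm_num : (-1 : K) ≠ 0), zpow_add₀ hb, mul_zpow]
  ring

lemma localSymbol_mul_swap {a b : K} (ha : a ≠ 0) (hb : b ≠ 0) (m n : ℤ) :
    localSymbol m n a b * localSymbol n m b a = 1 := by
  have hsign : ((-1 : K) ^ (m * n)) ^ 2 = 1 := by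
    rw [← zpow_natCast, ← zpow_mul, mul_comm, zpow_mul]
    norm_num
  simp only [localSymbol, mul_comm n m]
  field_simp
  linear_combination hsign

end Field

lemma ordAt_algebraMap (p : ℂ) (P : ℂ[X]) :
    ordAt p (algebraMap ℂ[X] (RatFunc ℂ) P) = P.rootMultiplicity p := by
  rw [ordAt, RatFunc.num_algebraMap, RatFunc.denom_algebraMap, ← C_1, rootMultiplicity_C,
    Nat.cast_zero, sub_zero]

lemma ordAt_one (p : ℂ) : ordAt p 1 = 0 := by
  rw [← map_one (algebraMap ℂ[X] (RatFunc ℂ)), ordAt_algebraMap, ← C_1, rootMultiplicity_C,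
    Nat.cast_zero]

lemma ordAt_mul (p : ℂ) {f g : RatFunc ℂ} (hf : f ≠ 0) (hg : g ≠ 0) :
    ordAt p (f * g) = ordAt p f + ordAt p g := by
  have key := congrArg (rootMultiplicity p) (RatFunc.num_denom_mul f g)
  rw [rootMultiplicity_mul, rootMultiplicity_mul, rootMultiplicity_mul,
    rootMultiplicity_mul] at key
  · simp only [ordAt]
    omega
  all_goals simp [hf, hg, RatFunc.denom_ne_zero]

lemma ordAt_inv (p : ℂ) {f : RatFunc ℂ} (hf : f ≠ 0) : ordAt p f⁻¹ = -ordAt p f := by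
  have h := ordAt_mul p (inv_ne_zero hf) hf
  rw [inv_mul_cancel₀ hf, ordAt_one] at h
  omega

lemma ordAt_div (p : ℂ) {f g : RatFunc ℂ} (hf : f ≠ 0) (hg : g ≠ 0) :
    ordAt p (f / g) = ordAt p f - ordAt p g := by
  rw [div_eq_mul_inv, ordAt_mul p hf (inv_ne_zero hg), ordAt_inv p hg, sub_eq_add_neg]

lemma ordAt_zpow (p : ℂ) {f : RatFunc ℂ} (hf : f ≠ 0) (n : ℤ) :
    ordAt p (f ^ n) = n * ordAt p f := by
  induction n using Int.induction_on with
  | zero => rw [zpow_zero, ordAt_one, zero_mul]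
  | succ n ih =>
    rw [zpow_add_one₀ hf, ordAt_mul p (zpow_ne_zero _ hf) hf, ih]
    ring
  | pred n ih =>
    rw [zpow_sub_one₀ hf, ← div_eq_mul_inv, ordAt_div p (zpow_ne_zero _ hf) hf, ih]
    ring

lemma ordAt_C (p c : ℂ) : ordAt p (RatFunc.C c) = 0 := by
  rw [← RatFunc.algebraMap_C, ordAt_algebraMap, rootMultiplicity_C, Nat.cast_zero]

lemma ordAt_X_sub_C (p a : ℂ) : ordAt p (RatFunc.X - RatFunc.C a) = if p = a then 1 else 0 := by
  rw [← algebraMap_X_sub_C, ordAt_algebraMap, rootMultiplicity_X_sub_C]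
  split_ifs <;> rfl

lemma finite_setOf_ordAt_ne_zero (h : RatFunc ℂ) : {p | ordAt p h ≠ 0}.Finite := by
  classical
  refine ((h.num.roots + h.denom.roots).toFinset.finite_toSet).subset fun p hp => ?_
  rw [Set.mem_ofPred_eq, ordAt] at hp
  rw [Finset.mem_coe, Multiset.mem_toFinset, Multiset.mem_add, ← Multiset.count_ne_zero,
    ← Multiset.count_ne_zero, count_roots, count_roots]
  omega

lemma eval_eq_leadingCoeffAt_of_ordAt_eq_zero {p : ℂ} {h : RatFunc ℂ} (h0 : ordAt p h = 0) :
    RatFunc.eval (RingHom.id ℂ) p h = leadingCoeffAt p h := by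
  have hboth := h.rootMultiplicity_num_eq_zero_or_denom p
  rw [ordAt] at h0
  rw [leadingCoeffAt_apply, taylorTrailingCoeff_of_rootMultiplicity_eq_zero (by omega),
    taylorTrailingCoeff_of_rootMultiplicity_eq_zero (by omega)]
  rfl

lemma ordInf_eq_neg_intDegree (h : RatFunc ℂ) : ordInf h = -h.intDegree := by
  rw [ordInf, RatFunc.intDegree, neg_sub]

lemma ordInf_mul {f g : RatFunc ℂ} (hf : f ≠ 0) (hg : g ≠ 0) :
    ordInf (f * g) = ordInf f + ordInf g := by
  rw [ordInf_eq_neg_intDegree, ordInf_eq_neg_intDegree, ordInf_eq_neg_intDegree,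
    RatFunc.intDegree_mul hf hg, neg_add]

lemma ordInf_C (c : ℂ) : ordInf (RatFunc.C c) = 0 := by
  rw [ordInf_eq_neg_intDegree, RatFunc.intDegree_C, neg_zero]

lemma ordInf_X_sub_C (a : ℂ) : ordInf (RatFunc.X - RatFunc.C a) = -1 := by
  rw [← algebraMap_X_sub_C, ordInf_eq_neg_intDegree, RatFunc.intDegree_polynomial,
    natDegree_X_sub_C, Nat.cast_one]

lemma evalInf_eq_leadingCoeffInf (h : RatFunc ℂ) : evalInf h = leadingCoeffInf h :=
  (leadingCoeffInf_apply h).symm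

lemma tameSymbolAt_eq_localSymbol (p : ℂ) {f g : RatFunc ℂ} (hf : f ≠ 0) (hg : g ≠ 0) :
    tameSymbolAt p f g =
      localSymbol (ordAt p f) (ordAt p g) (leadingCoeffAt p f) (leadingCoeffAt p g) := by
  have hord : ordAt p (f ^ ordAt p g / g ^ ordAt p f) = 0 := by
    rw [ordAt_div p (zpow_ne_zero _ hf) (zpow_ne_zero _ hg), ordAt_zpow p hf, ordAt_zpow p hg]
    ring
  rw [tameSymbolAt, eval_eq_leadingCoeffAt_of_ordAt_eq_zero hord, map_div₀, map_zpow₀, map_zpow₀]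
  rfl

lemma tameSymbolInf_eq_localSymbol (f g : RatFunc ℂ) :
    tameSymbolInf f g =
      localSymbol (ordInf f) (ordInf g) (leadingCoeffInf f) (leadingCoeffInf g) := by
  rw [tameSymbolInf, evalInf_eq_leadingCoeffInf, map_div₀, map_zpow₀, map_zpow₀]
  rfl

lemma tameSymbolAt_mul_left (p : ℂ) {f f' g : RatFunc ℂ} (hf : f ≠ 0) (hf' : f' ≠ 0)
    (hg : g ≠ 0) : tameSymbolAt p (f * f') g = tameSymbolAt p f g * tameSymbolAt p f' g := by
  rw [tameSymbolAt_eq_localSymbol p (mul_ne_zero hf hf') hg, tameSymbolAt_eq_localSymbol p hf hg,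
    tameSymbolAt_eq_localSymbol p hf' hg, ordAt_mul p hf hf', map_mul]
  exact localSymbol_add_mul ((_root_.map_ne_zero _).2 hg) _ _ _ _ _

lemma tameSymbolInf_mul_left {f f' g : RatFunc ℂ} (hf : f ≠ 0) (hf' : f' ≠ 0) (hg : g ≠ 0) :
    tameSymbolInf (f * f') g = tameSymbolInf f g * tameSymbolInf f' g := by
  rw [tameSymbolInf_eq_localSymbol, tameSymbolInf_eq_localSymbol, tameSymbolInf_eq_localSymbol,
    ordInf_mul hf hf', map_mul]
  exact localSymbol_add_mul ((_root_.map_ne_zero _).2 hg) _ _ _ _ _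

lemma tameSymbolAt_mul_swap (p : ℂ) {f g : RatFunc ℂ} (hf : f ≠ 0) (hg : g ≠ 0) :
    tameSymbolAt p f g * tameSymbolAt p g f = 1 := by
  rw [tameSymbolAt_eq_localSymbol p hf hg, tameSymbolAt_eq_localSymbol p hg hf]
  exact localSymbol_mul_swap ((_root_.map_ne_zero _).2 hf) ((_root_.map_ne_zero _).2 hg) _ _

lemma tameSymbolInf_mul_swap {f g : RatFunc ℂ} (hf : f ≠ 0) (hg : g ≠ 0) :
    tameSymbolInf f g * tameSymbolInf g f = 1 := by
  rw [tameSymbolInf_eq_localSymbol, tameSymbolInf_eq_localSymbol]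
  exact localSymbol_mul_swap ((_root_.map_ne_zero _).2 hf) ((_root_.map_ne_zero _).2 hg) _ _

lemma tameSymbolAt_eq_one_of_ordAt_eq_zero {p : ℂ} {f g : RatFunc ℂ}
    (hf : ordAt p f = 0) (hg : ordAt p g = 0) : tameSymbolAt p f g = 1 := by
  simp [tameSymbolAt, hf, hg]

lemma finite_mulSupport_tameSymbolAt (f g : RatFunc ℂ) :
    (Function.mulSupport fun p => tameSymbolAt p f g).Finite := by
  refine ((finite_setOf_ordAt_ne_zero f).union (finite_setOf_ordAt_ne_zero g)).subset
    fun p hp => ?_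
  by_contra hnot
  simp only [Set.mem_union, Set.mem_ofPred_eq, not_or, not_not] at hnot
  exact hp (tameSymbolAt_eq_one_of_ordAt_eq_zero hnot.1 hnot.2)

noncomputable def tameSymbolProd (f g : RatFunc ℂ) : ℂ :=
  (∏ᶠ p, tameSymbolAt p f g) * tameSymbolInf f g

lemma tameSymbolProd_mul_left {f f' g : RatFunc ℂ} (hf : f ≠ 0) (hf' : f' ≠ 0) (hg : g ≠ 0) :
    tameSymbolProd (f * f') g = tameSymbolProd f g * tameSymbolProd f' g := by
  simp only [tameSymbolProd, tameSymbolAt_mul_left _ hf hf' hg, tameSymbolInf_mul_left hf hf' hg,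
    finprod_mul_distrib (finite_mulSupport_tameSymbolAt f g) (finite_mulSupport_tameSymbolAt f' g)]
  ring

lemma tameSymbolProd_mul_swap {f g : RatFunc ℂ} (hf : f ≠ 0) (hg : g ≠ 0) :
    tameSymbolProd f g * tameSymbolProd g f = 1 := by
  calc tameSymbolProd f g * tameSymbolProd g f
      = (∏ᶠ p, tameSymbolAt p f g * tameSymbolAt p g f) *
          (tameSymbolInf f g * tameSymbolInf g f) := by
        rw [tameSymbolProd, tameSymbolProd, finprod_mul_distrib
          (finite_mulSupport_tameSymbolAt f g) (finite_mulSupport_tameSymbolAt g f)]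
        ring
    _ = 1 := by simp [tameSymbolAt_mul_swap _ hf hg, tameSymbolInf_mul_swap hf hg]

lemma tameSymbolProd_swap_eq_one {f g : RatFunc ℂ} (hf : f ≠ 0) (hg : g ≠ 0)
    (h : tameSymbolProd f g = 1) : tameSymbolProd g f = 1 := by
  simpa [h] using tameSymbolProd_mul_swap hf hg

lemma tameSymbolProd_C_C (c c' : ℂ) : tameSymbolProd (RatFunc.C c) (RatFunc.C c') = 1 := by
  simp [tameSymbolProd, tameSymbolAt_eq_one_of_ordAt_eq_zero (ordAt_C _ c) (ordAt_C _ c'),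
    tameSymbolInf_eq_localSymbol, ordInf_C, localSymbol]

lemma tameSymbolProd_C_X_sub_C {c : ℂ} (hc : c ≠ 0) (b : ℂ) :
    tameSymbolProd (RatFunc.C c) (RatFunc.X - RatFunc.C b) = 1 := by
  have hprod : ∏ᶠ p, tameSymbolAt p (RatFunc.C c) (RatFunc.X - RatFunc.C b) = c := by
    rw [finprod_eq_single _ b fun p hp => tameSymbolAt_eq_one_of_ordAt_eq_zero (ordAt_C p c)
      (by simp [ordAt_X_sub_C, hp]), tameSymbolAt_eq_localSymbol b ((_root_.map_ne_zero _).2 hc)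
      (RatFunc.X_sub_C_ne_zero b)]
    simp [localSymbol, ordAt_C, ordAt_X_sub_C, leadingCoeffAt_C, leadingCoeffAt_X_sub_C_self]
  rw [tameSymbolProd, hprod, tameSymbolInf_eq_localSymbol, ordInf_C, ordInf_X_sub_C,
    leadingCoeffInf_C, leadingCoeffInf_X_sub_C]
  simp [localSymbol, hc]

lemma tameSymbolProd_X_sub_C_X_sub_C (a b : ℂ) :
    tameSymbolProd (RatFunc.X - RatFunc.C a) (RatFunc.X - RatFunc.C b) = 1 := by
  have hinf : tameSymbolInf (RatFunc.X - RatFunc.C a) (RatFunc.X - RatFunc.C b) = -1 := by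
    simp [tameSymbolInf_eq_localSymbol, ordInf_X_sub_C, leadingCoeffInf_X_sub_C, localSymbol]
  have hsupp : (Function.mulSupport fun p =>
      tameSymbolAt p (RatFunc.X - RatFunc.C a) (RatFunc.X - RatFunc.C b)) ⊆
      (({a, b} : Finset ℂ) : Set ℂ) := fun p hp => by
    by_contra hab
    simp only [Finset.coe_insert, Finset.coe_singleton, Set.mem_insert_iff,
      Set.mem_singleton_iff, not_or] at hab
    exact hp (tameSymbolAt_eq_one_of_ordAt_eq_zero (by simp [ordAt_X_sub_C, hab.1])
      (by simp [ordAt_X_sub_C, hab.2]))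
  rw [tameSymbolProd, hinf, finprod_eq_prod_of_mulSupport_subset _ hsupp]
  rcases eq_or_ne a b with rfl | hab
  · simp [tameSymbolAt_eq_localSymbol _ (RatFunc.X_sub_C_ne_zero a) (RatFunc.X_sub_C_ne_zero a),
      ordAt_X_sub_C, leadingCoeffAt_X_sub_C_self, localSymbol]
  · rw [Finset.prod_pair hab,
      tameSymbolAt_eq_localSymbol _ (RatFunc.X_sub_C_ne_zero a) (RatFunc.X_sub_C_ne_zero b),
      tameSymbolAt_eq_localSymbol _ (RatFunc.X_sub_C_ne_zero a) (RatFunc.X_sub_C_ne_zero b)]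
    simp only [localSymbol, ordAt_X_sub_C, ↓reduceIte, hab, hab.symm, mul_zero, zpow_ofNat,
      pow_zero, pow_one, one_div, one_mul, mul_one, div_one, leadingCoeffAt_X_sub_C_self,
      leadingCoeffAt_X_sub_C_of_ne hab, leadingCoeffAt_X_sub_C_of_ne hab.symm, mul_neg]
    rw [← neg_sub a b, mul_neg, neg_neg, inv_mul_cancel₀ (sub_ne_zero.2 hab)]

lemma tameSymbolProd_eq_one_of_generators {g : RatFunc ℂ} (hg : g ≠ 0)
    (hC : ∀ c : ℂ, c ≠ 0 → tameSymbolProd (RatFunc.C c) g = 1)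
    (hX : ∀ a : ℂ, tameSymbolProd (RatFunc.X - RatFunc.C a) g = 1)
    {f : RatFunc ℂ} (hf : f ≠ 0) : tameSymbolProd f g = 1 :=
  RatFunc.eq_one_of_map_C_of_map_X_sub_C (tameSymbolProd · g)
    (fun _ _ hf hf' => tameSymbolProd_mul_left hf hf' hg) hC hX hf

lemma tameSymbolProd_eq_one {f g : RatFunc ℂ} (hf : f ≠ 0) (hg : g ≠ 0) :
    tameSymbolProd f g = 1 := by
  have hC_ne {c : ℂ} (hc : c ≠ 0) : RatFunc.C c ≠ 0 := (_root_.map_ne_zero _).2 hc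
  have right_C {c : ℂ} (hc : c ≠ 0) {f : RatFunc ℂ} (hf : f ≠ 0) :
      tameSymbolProd f (RatFunc.C c) = 1 :=
    tameSymbolProd_eq_one_of_generators (hC_ne hc) (fun c' _ => tameSymbolProd_C_C c' c)
      (fun a => tameSymbolProd_swap_eq_one (hC_ne hc) (RatFunc.X_sub_C_ne_zero a)
        (tameSymbolProd_C_X_sub_C hc a)) hf
  have right_X_sub_C (b : ℂ) {f : RatFunc ℂ} (hf : f ≠ 0) :
      tameSymbolProd f (RatFunc.X - RatFunc.C b) = 1 :=
    tameSymbolProd_eq_one_of_generators (RatFunc.X_sub_C_ne_zero b)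
      (fun _ hc => tameSymbolProd_C_X_sub_C hc b) (fun a => tameSymbolProd_X_sub_C_X_sub_C a b) hf
  refine tameSymbolProd_swap_eq_one hg hf (tameSymbolProd_eq_one_of_generators hf ?_ ?_ hg)
  · exact fun c hc => tameSymbolProd_swap_eq_one hf (hC_ne hc) (right_C hc hf)
  · exact fun a => tameSymbolProd_swap_eq_one hf (RatFunc.X_sub_C_ne_zero a) (right_X_sub_C a hf)

/-- **Weil reciprocity for `ℂ(t)`**: for nonzero rational functions `f, g ∈ ℂ(t)`,
the tame symbol `d_p(f,g)` equals `1` for all but finitely many `p ∈ ℂ`, and the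
product over all points of `ℂ ∪ {∞}` of the tame symbols equals `1`. -/
theorem weil_reciprocity_ratfunc (f g : RatFunc ℂ) (hf : f ≠ 0) (hg : g ≠ 0) :
    {p : ℂ | tameSymbolAt p f g ≠ 1}.Finite ∧
      (∏ᶠ p : ℂ, tameSymbolAt p f g) * tameSymbolInf f g = 1 :=
  ⟨finite_mulSupport_tameSymbolAt f g, tameSymbolProd_eq_one hf hg⟩
end

section
/- Shuffle relation: let φ₁, …, φ_{m+n} : [0,1] → ℂ be continuous functions. Then (∫_{0≤t₁≤⋯≤t_m≤1} ∏_{i=1}^m φ_i(t_i) dt)·(∫_{0≤s₁≤⋯≤s_n≤1} ∏_{j=1}^n φ_{m+j}(s_j) ds) = ∑_S ∫_{0≤u₁≤⋯≤u_{m+n}≤1} ∏_{i=1}^{m+n} φ_{τ_S(i)}(u_i) du, where the sum is over all m-element subsets S ⊆ {1,…,m+n} and τ_S : {1,…,m+n} → {1,…,m+n} is the bijection placing φ₁,…,φ_m (in this order) in the positions of S and φ_{m+1},…,φ_{m+n} (in this order) in the positions of the complement of S. Equivalently, the sum ranges over all (m,n)-shuffles. -/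
/-!
Both sides integrate `t ↦ ∏ i, φ i (t i)` over pieces of the cube `[0,1]^(m+n)`. By Fubini
the left side is the integral over the product of the two simplices, i.e. over the tuples
increasing along the first `m` and along the last `n` coordinates. Off the null set where two
coordinates coincide, a tuple `t` lies in exactly one chamber
`t (σ⁻¹ 0) ≤ ⋯ ≤ t (σ⁻¹ (m+n-1))`, namely the one where `σ` is its rank function, and `t`
lies in the product of simplices exactly when this `σ` is a shuffle. Permuting coordinates
turns the integral over the chamber of `σ` into the `σ`-th term on the right.
-/

open MeasureTheory

/-- The simplex `{0 ≤ t 1 ≤ ⋯ ≤ t k ≤ 1}` in `[0,1]^k`. -/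
def orderedSimplex (k : ℕ) : Set (Fin k → ℝ) :=
  {t | (∀ i, t i ∈ Set.Icc (0 : ℝ) 1) ∧ ∀ i j : Fin k, i ≤ j → t i ≤ t j}

/-- The integral `∫_{0 ≤ t₁ ≤ ⋯ ≤ t_k ≤ 1} ∏_{i} φ_i(t_i) dt` over the simplex. -/
noncomputable def simplexIntegral (k : ℕ) (φ : Fin k → ℝ → ℂ) : ℂ :=
  ∫ t in orderedSimplex k, ∏ i, φ i (t i)

/-- `σ` is an `(m,n)`-shuffle of `Fin (m+n)`: it is strictly increasing on the first `m`
indices and on the last `n` indices.  (`σ i` is the position into which the `i`-th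
function is placed; the set `S` of the statement is the image of the first `m` indices.) -/
def IsShuffle (m n : ℕ) (σ : Equiv.Perm (Fin (m + n))) : Prop :=
  (∀ i j : Fin (m + n), i < j → (j : ℕ) < m → σ i < σ j) ∧
  (∀ i j : Fin (m + n), i < j → m ≤ (i : ℕ) → σ i < σ j)

open Set

theorem Function.Injective.strictMono_iff_monotone {α β : Type*} [PartialOrder α]
    [PartialOrder β] {f : α → β} (hf : Function.Injective f) : StrictMono f ↔ Monotone f :=
  ⟨StrictMono.monotone, fun h => h.strictMono_of_injective hf⟩

namespace Tuple

variable {α : Type*} [LinearOrder α] {k : ℕ} {t : Fin k → α}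

theorem monotone_comp_iff_eq_sort (ht : Function.Injective t) {σ : Equiv.Perm (Fin k)} :
    Monotone (t ∘ σ) ↔ σ = sort t := by
  rw [← comp_sort_eq_comp_iff_monotone, ht.comp_left.eq_iff, DFunLike.coe_fn_eq]

/-- `(sort t).symm i` is the rank of `t i` among the entries of `t`. -/
theorem sort_symm_lt_sort_symm_iff (ht : Function.Injective t) {i j : Fin k} :
    (sort t).symm i < (sort t).symm j ↔ t i < t j := by
  have hsorted : StrictMono (t ∘ sort t) :=
    (monotone_sort t).strictMono_of_injective (ht.comp (sort t).injective)
  simpa using (hsorted.lt_iff_lt (a := (sort t).symm i) (b := (sort t).symm j)).symm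

theorem strictMono_sort_symm_comp_iff {β : Type*} [Preorder β] (ht : Function.Injective t)
    {g : β → Fin k} : StrictMono ((sort t).symm ∘ g) ↔ StrictMono (t ∘ g) := by
  simp only [StrictMono, Function.comp_apply, sort_symm_lt_sort_symm_iff ht]

end Tuple

theorem Fin.exists_natAdd_eq {m n : ℕ} {i : Fin (m + n)} (hi : m ≤ (i : ℕ)) :
    ∃ i' : Fin n, Fin.natAdd m i' = i :=
  ⟨⟨i - m, by omega⟩, Fin.ext (by simp; omega)⟩

theorem isShuffle_iff {m n : ℕ} {σ : Equiv.Perm (Fin (m + n))} :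
    IsShuffle m n σ ↔
      StrictMono (σ ∘ Fin.castAdd n) ∧ StrictMono (σ ∘ Fin.natAdd m) := by
  refine ⟨fun h => ⟨fun i j hij => h.1 _ _ hij j.isLt,
      fun i j hij => h.2 _ _ (by simpa) (by simp)⟩,
    fun h => ⟨fun i j hij hj => ?_, fun i j hij hi => ?_⟩⟩
  · obtain ⟨i, rfl⟩ : ∃ i' : Fin m, Fin.castAdd n i' = i :=
      ⟨⟨i, (Fin.lt_def.1 hij).trans hj⟩, rfl⟩
    obtain ⟨j, rfl⟩ : ∃ j' : Fin m, Fin.castAdd n j' = j := ⟨⟨j, hj⟩, rfl⟩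
    exact h.1 (Fin.lt_def.2 (Fin.lt_def.1 hij))
  · obtain ⟨i, rfl⟩ := Fin.exists_natAdd_eq hi
    obtain ⟨j, rfl⟩ := Fin.exists_natAdd_eq (hi.trans (Fin.le_def.1 hij.le))
    exact h.2 (by simpa using hij)

theorem isShuffle_sort_symm_iff {α : Type*} [LinearOrder α] {m n : ℕ} {t : Fin (m + n) → α}
    (ht : Function.Injective t) :
    IsShuffle m n (Tuple.sort t).symm ↔
      Monotone (t ∘ Fin.castAdd n) ∧ Monotone (t ∘ Fin.natAdd m) := by
  rw [isShuffle_iff, Tuple.strictMono_sort_symm_comp_iff ht, Tuple.strictMono_sort_symm_comp_iff ht,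
    (ht.comp (Fin.castAdd_injective m n)).strictMono_iff_monotone,
    (ht.comp (Fin.natAdd_injective _ _)).strictMono_iff_monotone]

section Null

variable {ι : Type*} [Fintype ι]

theorem volume_setOf_apply_eq_apply {a b : ι} (hab : a ≠ b) :
    volume {t : ι → ℝ | t a = t b} = 0 := by
  classical
  let L : (ι → ℝ) →ₗ[ℝ] ℝ :=
    LinearMap.proj (R := ℝ) (φ := fun _ : ι => ℝ) a - LinearMap.proj b
  have hker : {t : ι → ℝ | t a = t b} = (LinearMap.ker L : Set (ι → ℝ)) := by
    ext t
    simp [L, sub_eq_zero]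
  rw [hker]
  refine Measure.addHaar_submodule _ _ fun htop => ?_
  have hsingle : (Pi.single a 1 : ι → ℝ) ∈ LinearMap.ker L := htop ▸ Submodule.mem_top
  simp [L, hab.symm] at hsingle

theorem ae_injective : ∀ᵐ t : ι → ℝ, Function.Injective t := by
  have hnull : ∀ᵐ t : ι → ℝ, ∀ a b, a ≠ b → t a ≠ t b := by
    simp only [ae_all_iff]
    exact fun a b hab => measure_eq_zero_iff_ae_notMem.1 (volume_setOf_apply_eq_apply hab)
  filter_upwards [hnull] with t ht a b
  exact not_imp_not.1 (ht a b)

end Null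

theorem integrableOn_prod_apply_of_continuousOn {ι R : Type*} [Fintype ι] [NormedCommRing R]
    {K : Set ℝ} (hK : IsCompact K) {φ : ι → ℝ → R} (hφ : ∀ i, ContinuousOn (φ i) K)
    {s : Set (ι → ℝ)} (hs : s ⊆ univ.pi fun _ => K) :
    IntegrableOn (fun t => ∏ i, φ i (t i)) s := by
  have hcont : ContinuousOn (fun t : ι → ℝ => ∏ i, φ i (t i)) (univ.pi fun _ => K) :=
    continuousOn_finsetProd _ fun i _ =>
      (hφ i).comp (continuous_apply i).continuousOn fun _ ht => ht i (mem_univ i)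
  exact (hcont.integrableOn_compact (isCompact_univ_pi fun _ => hK)).mono_set hs

section Simplex

variable {k : ℕ}

theorem orderedSimplex_eq_pi_inter_monotone :
    orderedSimplex k = (univ.pi fun _ => Icc 0 1) ∩ {t | Monotone t} := by
  ext t
  simp only [orderedSimplex, mem_inter_iff, mem_pi, mem_univ, true_imp_iff, mem_ofPred_eq]
  rfl

theorem isClosed_orderedSimplex : IsClosed (orderedSimplex k) := by
  rw [orderedSimplex_eq_pi_inter_monotone]
  exact (isClosed_set_pi fun _ _ => isClosed_Icc).inter isClosed_monotone

/-- The chamber of the cube on which the coordinate of index `j` has rank `σ j`. -/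
def permutedSimplex (σ : Equiv.Perm (Fin k)) : Set (Fin k → ℝ) :=
  {t | t ∘ σ.symm ∈ orderedSimplex k}

theorem mem_permutedSimplex_iff {t : Fin k → ℝ} (ht : Function.Injective t)
    {σ : Equiv.Perm (Fin k)} :
    t ∈ permutedSimplex σ ↔ t ∈ (univ.pi fun _ => Icc 0 1) ∧ σ = (Tuple.sort t).symm := by
  rw [permutedSimplex, mem_ofPred_eq, orderedSimplex_eq_pi_inter_monotone]
  simp only [mem_inter_iff, mem_pi, mem_univ, true_imp_iff, mem_ofPred_eq, Function.comp_apply,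
    Tuple.monotone_comp_iff_eq_sort ht, Equiv.symm_bijective.injective.eq_iff' (Equiv.symm_symm _)]
  exact and_congr_left' (σ.symm.surjective.forall (p := fun i => t i ∈ Icc 0 1)).symm

theorem isClosed_permutedSimplex (σ : Equiv.Perm (Fin k)) : IsClosed (permutedSimplex σ) :=
  isClosed_orderedSimplex.preimage (continuous_pi fun _ => continuous_apply _)

theorem permutedSimplex_subset_pi (σ : Equiv.Perm (Fin k)) :
    permutedSimplex σ ⊆ univ.pi fun _ => Icc 0 1 := by
  intro t ht i _
  simpa using ht.1 (σ i)

theorem aedisjoint_permutedSimplex {σ τ : Equiv.Perm (Fin k)} (hστ : σ ≠ τ) :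
    AEDisjoint volume (permutedSimplex σ) (permutedSimplex τ) := by
  refine measure_eq_zero_iff_ae_notMem.2 ?_
  filter_upwards [ae_injective] with t ht ⟨hσ, hτ⟩
  exact hστ <|
    ((mem_permutedSimplex_iff ht).1 hσ).2.trans ((mem_permutedSimplex_iff ht).1 hτ).2.symm

theorem simplexIntegral_perm_symm_eq_setIntegral (φ : Fin k → ℝ → ℂ)
    (σ : Equiv.Perm (Fin k)) :
    simplexIntegral k (fun i => φ (σ.symm i)) =
      ∫ t in permutedSimplex σ, ∏ i, φ i (t i) := by
  let e := MeasurableEquiv.piCongrLeft (fun _ : Fin k => ℝ) σ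
  have he : ∀ t, e t = t ∘ σ.symm := fun t => by
    ext i
    simp [e, MeasurableEquiv.coe_piCongrLeft, Equiv.piCongrLeft_apply]
  have hpre : e ⁻¹' orderedSimplex k = permutedSimplex σ := by
    ext t
    simp only [mem_preimage, he, permutedSimplex, mem_ofPred_eq]
  calc simplexIntegral k (fun i => φ (σ.symm i))
      = ∫ t in e ⁻¹' orderedSimplex k, ∏ i, φ (σ.symm i) (e t i) :=
        ((volume_measurePreserving_piCongrLeft (fun _ => ℝ) σ).setIntegral_preimage_emb
          e.measurableEmbedding _ _).symm
    _ = ∫ t in permutedSimplex σ, ∏ i, φ i (t i) := by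
        rw [hpre]
        congr with t
        simpa only [he, Function.comp_apply] using Equiv.prod_comp σ.symm (fun j => φ j (t j))

end Simplex

def MeasurableEquiv.piFinAddProd (β : Type*) [MeasurableSpace β] (m n : ℕ) :
    (Fin (m + n) → β) ≃ᵐ (Fin m → β) × (Fin n → β) :=
  (MeasurableEquiv.piCongrLeft (fun _ => β) finSumFinEquiv).symm.trans
    (MeasurableEquiv.sumPiEquivProdPi fun _ => β)

theorem MeasurableEquiv.piFinAddProd_apply {β : Type*} [MeasurableSpace β] {m n : ℕ}
    (t : Fin (m + n) → β) :
    MeasurableEquiv.piFinAddProd β m n t = (t ∘ Fin.castAdd n, t ∘ Fin.natAdd m) := by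
  ext j <;> simp [MeasurableEquiv.piFinAddProd, MeasurableEquiv.sumPiEquivProdPi,
    MeasurableEquiv.piCongrLeft, Equiv.piCongrLeft_symm_apply]

theorem volume_measurePreserving_piFinAddProd (β : Type*) [MeasureSpace β]
    [SigmaFinite (volume : Measure β)] {m n : ℕ} :
    MeasurePreserving (MeasurableEquiv.piFinAddProd β m n) :=
  (volume_measurePreserving_sumPiEquivProdPi fun _ : Fin m ⊕ Fin n => β).comp
      (volume_measurePreserving_piCongrLeft (fun _ => β) finSumFinEquiv).symm

def blockSimplex (m n : ℕ) : Set (Fin (m + n) → ℝ) :=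
  {t | t ∘ Fin.castAdd n ∈ orderedSimplex m ∧ t ∘ Fin.natAdd m ∈ orderedSimplex n}

section Blocks

variable {m n : ℕ}

theorem mem_blockSimplex_iff {t : Fin (m + n) → ℝ} (ht : Function.Injective t) :
    t ∈ blockSimplex m n ↔
      t ∈ (univ.pi fun _ => Icc 0 1) ∧ IsShuffle m n (Tuple.sort t).symm := by
  simp only [blockSimplex, orderedSimplex_eq_pi_inter_monotone, isShuffle_sort_symm_iff ht,
    mem_ofPred_eq, mem_inter_iff, mem_pi, mem_univ, true_imp_iff, Function.comp_apply]
  rw [Fin.forall_fin_add (fun i => t i ∈ Icc 0 1)]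
  tauto

theorem simplexIntegral_mul_simplexIntegral (φ : Fin (m + n) → ℝ → ℂ) :
    simplexIntegral m (fun i => φ (Fin.castAdd n i)) *
      simplexIntegral n (fun j => φ (Fin.natAdd m j)) =
    ∫ t in blockSimplex m n, ∏ i, φ i (t i) := by
  let e := MeasurableEquiv.piFinAddProd ℝ m n
  have hpre : e ⁻¹' (orderedSimplex m ×ˢ orderedSimplex n) = blockSimplex m n := by
    ext t
    simp only [mem_preimage, e, MeasurableEquiv.piFinAddProd_apply, mem_prod, blockSimplex,
      mem_ofPred_eq]
  rw [simplexIntegral, simplexIntegral, ← setIntegral_prod_mul, ← Measure.volume_eq_prod,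
    ← (volume_measurePreserving_piFinAddProd ℝ).setIntegral_preimage_emb e.measurableEmbedding,
    hpre]
  congr with t
  simp only [MeasurableEquiv.piFinAddProd_apply, Function.comp_apply]
  exact (Fin.prod_univ_add fun i => φ i (t i)).symm

theorem blockSimplex_ae_eq_iUnion :
    blockSimplex m n =ᵐ[volume] ⋃ σ : {σ // IsShuffle m n σ}, permutedSimplex σ.1 := by
  refine Filter.eventuallyEq_set.2 ?_
  filter_upwards [ae_injective] with t ht
  simp only [mem_iUnion, Subtype.exists, mem_blockSimplex_iff ht, mem_permutedSimplex_iff ht,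
    exists_prop]
  constructor
  · rintro ⟨hcube, hshuffle⟩
    exact ⟨_, hshuffle, hcube, rfl⟩
  · rintro ⟨σ, hσ, hcube, rfl⟩
    exact ⟨hcube, hσ⟩

end Blocks

/-- **Shuffle relation** for iterated integrals: the product of the simplex integral of
`φ₁, …, φ_m` and that of `φ_{m+1}, …, φ_{m+n}` is the sum, over all `(m,n)`-shuffles,
of the simplex integrals of the shuffled family.  At position `i` of the big simplex the
function `φ_{σ⁻¹ i}` is integrated, i.e. `φ_j` is placed at position `σ j`. -/
theorem shuffle_relation (m n : ℕ) [DecidablePred (IsShuffle m n)] (φ : Fin (m + n) → ℝ → ℂ)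
    (hφ : ∀ i, ContinuousOn (φ i) (Set.Icc 0 1)) :
    simplexIntegral m (fun i => φ (Fin.castAdd n i)) *
      simplexIntegral n (fun j => φ (Fin.natAdd m j)) =
    ∑ σ ∈ Finset.univ.filter (fun σ => IsShuffle m n σ),
      simplexIntegral (m + n) (fun i => φ (σ.symm i)) := by
  let chamber : {σ // IsShuffle m n σ} → Set (Fin (m + n) → ℝ) :=
    fun σ => permutedSimplex σ.1
  have hmeas : ∀ σ, NullMeasurableSet (chamber σ) := fun σ =>
    (isClosed_permutedSimplex σ.1).measurableSet.nullMeasurableSet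
  have hdisj : Pairwise (Function.onFun (AEDisjoint volume) chamber) := fun σ τ hστ =>
    aedisjoint_permutedSimplex (Subtype.coe_injective.ne hστ)
  have hint : IntegrableOn (fun t => ∏ i, φ i (t i)) (⋃ σ, chamber σ) :=
    integrableOn_finite_iUnion.2 fun σ =>
      integrableOn_prod_apply_of_continuousOn isCompact_Icc hφ (permutedSimplex_subset_pi σ.1)
  rw [simplexIntegral_mul_simplexIntegral, setIntegral_congr_set blockSimplex_ae_eq_iUnion,
    integral_iUnion_ae hmeas hdisj hint, tsum_fintype,
    Finset.sum_subtype (F := inferInstance) _ fun σ => Finset.mem_filter_univ σ]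
  simp only [chamber, simplexIntegral_perm_symm_eq_setIntegral]
end

section
/- Reversing the path: let γ : [0,1] → ℂ be a piecewise C¹ path and let f₁, …, f_n be continuous functions on the image of γ. Let γ⁻¹(t) := γ(1−t) be the reversed path. Then ∫_γ f₁ dz ∘ f₂ dz ∘ ⋯ ∘ f_n dz = (−1)^n ∫_{γ⁻¹} f_n dz ∘ f_{n−1} dz ∘ ⋯ ∘ f₁ dz. -/
open MeasureTheory

/-- The iterated integral `∫_γ f₁ dz ∘ ⋯ ∘ f_n dz
  := ∫_{0 ≤ t₁ ≤ ⋯ ≤ t_n ≤ 1} ∏ i, f_i (γ (t_i)) γ'(t_i) dt`. -/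
noncomputable def iteratedPathIntegral (n : ℕ) (γ : ℝ → ℂ) (f : Fin n → ℂ → ℂ) : ℂ :=
  ∫ t in orderedSimplex n, ∏ i, f i (γ (t i)) * deriv γ (t i)

/-- A path `γ : [0,1] → ℂ` is piecewise C¹ : it is continuous on `[0,1]` and, away from a
finite set of times, it is differentiable with continuous derivative. -/
def PiecewiseC1 (γ : ℝ → ℂ) : Prop :=
  ContinuousOn γ (Set.Icc 0 1) ∧
    ∃ s : Finset ℝ, ∀ t ∈ Set.Icc (0 : ℝ) 1 \ (s : Set ℝ),
      HasDerivAt γ (deriv γ t) t ∧ ContinuousWithinAt (deriv γ) (Set.Icc 0 1 \ (s : Set ℝ)) t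

/-- The reversal map `t ↦ (i ↦ 1 - t (rev i))` as a measurable equiv. -/
def revME (n : ℕ) : (Fin n → ℝ) ≃ᵐ (Fin n → ℝ) where
  toFun t := fun i => 1 - t (Fin.rev i)
  invFun t := fun i => 1 - t (Fin.rev i)
  left_inv t := by funext i; simp
  right_inv t := by funext i; simp
  measurable_toFun :=
    measurable_pi_iff.mpr fun i => (measurable_pi_apply _).const_sub 1
  measurable_invFun :=
    measurable_pi_iff.mpr fun i => (measurable_pi_apply _).const_sub 1

lemma revMP (n : ℕ) :
    MeasurePreserving (fun t : Fin n → ℝ => fun i => 1 - t (Fin.rev i)) volume volume := by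
  have h1 : MeasurePreserving (fun t : Fin n → ℝ => fun i => t (Fin.rev i)) volume volume := by
    have h := volume_measurePreserving_piCongrLeft (fun _ : Fin n => ℝ) (Fin.revPerm (n := n))
    have he : ⇑(MeasurableEquiv.piCongrLeft (fun _ : Fin n => ℝ) Fin.revPerm)
        = fun t : Fin n → ℝ => fun i => t (Fin.rev i) := by
      funext t i
      rw [MeasurableEquiv.coe_piCongrLeft, Equiv.piCongrLeft_apply, eq_rec_constant]
      simp
    rwa [he] at h
  have h2 : MeasurePreserving (fun t : Fin n → ℝ => fun i => 1 - t i) volume volume :=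
    measurePreserving_pi _ _ (fun _ => Measure.measurePreserving_sub_left volume 1)
  exact h2.comp h1

lemma orderedSimplex_isClosed (n : ℕ) : IsClosed (orderedSimplex n) := by
  have h1 : orderedSimplex n =
      (⋂ i, Function.eval i ⁻¹' Set.Icc (0:ℝ) 1) ∩
        ⋂ i, ⋂ j, ⋂ (_ : i ≤ j), {t : Fin n → ℝ | t i ≤ t j} := by
    ext t
    simp [orderedSimplex, Set.mem_iInter, Function.eval]
  rw [h1]
  exact (isClosed_iInter fun i => isClosed_Icc.preimage (continuous_apply i)).inter
    (isClosed_iInter fun i => isClosed_iInter fun j => isClosed_iInter fun _ =>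
      isClosed_le (continuous_apply i) (continuous_apply j))

/-- **Reversing the path**: for a piecewise C¹ path `γ` on `[0,1]` and continuous
functions `f₁, …, f_n` on the image of `γ`,
`∫_γ f₁ dz ∘ ⋯ ∘ f_n dz = (-1)^n ∫_{γ⁻¹} f_n dz ∘ ⋯ ∘ f₁ dz`
where `γ⁻¹ (t) = γ (1 - t)` is the reversed path. -/
theorem iteratedPathIntegral_reverse (n : ℕ) (γ : ℝ → ℂ) (hγ : PiecewiseC1 γ)
    (f : Fin n → ℂ → ℂ) (hf : ∀ i, ContinuousOn (f i) (γ '' Set.Icc 0 1)) :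
    iteratedPathIntegral n γ f =
      (-1 : ℂ) ^ n * iteratedPathIntegral n (fun t => γ (1 - t)) (fun i => f i.rev) := by
  classical
  obtain ⟨hcont, s, hs⟩ := hγ
  -- derivative of the reversed path
  have hderiv : ∀ u ∈ Set.Icc (0:ℝ) 1 \ (s : Set ℝ),
      deriv (fun t => γ (1 - t)) (1 - u) = -(deriv γ u) := by
    intro u hu
    have h1 : HasDerivAt (fun x : ℝ => 1 - x) (-1) (1 - u) := by
      simpa using (hasDerivAt_id (1 - u)).const_sub 1
    have h2 : HasDerivAt γ (deriv γ u) (1 - (1 - u)) := by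
      rw [show (1:ℝ) - (1 - u) = u from by ring]
      exact (hs u hu).1
    have h3 := h2.scomp (1 - u) h1
    have h4 : HasDerivAt (fun t => γ (1 - t)) ((-1 : ℝ) • deriv γ u) (1 - u) := h3
    rw [h4.deriv]
    simp
  set T : (Fin n → ℝ) → (Fin n → ℝ) := fun t => fun i => 1 - t (Fin.rev i) with hTdef
  have hT : MeasurePreserving T volume volume := revMP n
  have hemb : MeasurableEmbedding T := (revME n).measurableEmbedding
  have hmem : ∀ t ∈ orderedSimplex n, T t ∈ orderedSimplex n := by
    rintro t ⟨h1, h2⟩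
    refine ⟨fun i => ?_, fun i j hij => ?_⟩
    · obtain ⟨ha, hb⟩ := h1 (Fin.rev i)
      exact ⟨by simp [T]; linarith, by simp [T]; linarith⟩
    · have hrev : Fin.rev j ≤ Fin.rev i := Fin.rev_le_rev.mpr hij
      have := h2 _ _ hrev
      simp only [T]
      linarith
  have hTT : ∀ t, T (T t) = t := by
    intro t; funext i; simp [T]
  have hpre : T ⁻¹' orderedSimplex n = orderedSimplex n := by
    ext t
    constructor
    · intro h
      have := hmem _ h
      rwa [hTT] at this
    · exact fun h => hmem t h
  -- null set of bad times
  have hnull : ∀ᵐ t : Fin n → ℝ, ∀ i, t i ∉ (s : Set ℝ) := by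
    rw [MeasureTheory.ae_all_iff]
    intro i
    have hz : volume {t : Fin n → ℝ | t i ∈ (s : Set ℝ)} = 0 := by
      have he : {t : Fin n → ℝ | t i ∈ (s : Set ℝ)} = ⋃ x ∈ (s : Set ℝ), {t | t i = x} := by
        ext t; simp
      rw [he]
      refine (measure_biUnion_null_iff s.countable_toSet).mpr fun x _ => ?_
      rw [show (volume : Measure (Fin n → ℝ)) = Measure.pi fun _ : Fin n => (volume : Measure ℝ) from rfl]
      exact Measure.pi_hyperplane (fun _ : Fin n => (volume : Measure ℝ)) i x
    exact compl_mem_ae_iff.2 hz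
  -- the key substitution
  have key : iteratedPathIntegral n (fun t => γ (1 - t)) (fun i => f i.rev)
      = (-1:ℂ)^n * iteratedPathIntegral n γ f := by
    unfold iteratedPathIntegral
    rw [← hT.setIntegral_preimage_emb hemb
      (fun t => ∏ i, f (Fin.rev i) (γ (1 - t i)) * deriv (fun u => γ (1 - u)) (t i))
      (orderedSimplex n), hpre]
    rw [← MeasureTheory.integral_const_mul]
    refine setIntegral_congr_ae (orderedSimplex_isClosed n).measurableSet ?_
    filter_upwards [hnull] with t hts htS
    have hic : ∀ i, t i ∈ Set.Icc (0:ℝ) 1 \ (s : Set ℝ) := fun i => ⟨htS.1 i, hts i⟩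
    have h11 : ∀ a : ℝ, (1:ℝ) - (1 - a) = a := fun a => by ring
    calc (∏ i, f (Fin.rev i) (γ (1 - (T t i))) * deriv (fun u => γ (1 - u)) (T t i))
        = ∏ i, f (Fin.rev i) (γ (t (Fin.rev i))) *
            deriv (fun u => γ (1 - u)) (1 - t (Fin.rev i)) := by
          refine Finset.prod_congr rfl fun i _ => ?_
          simp only [T, h11]
      _ = ∏ i, f (Fin.rev i) (γ (t (Fin.rev i))) * -(deriv γ (t (Fin.rev i))) := by
          refine Finset.prod_congr rfl fun i _ => ?_
          rw [hderiv _ (hic _)]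
      _ = ∏ i, f i (γ (t i)) * -(deriv γ (t i)) :=
          Equiv.prod_comp Fin.revPerm (fun j => f j (γ (t j)) * -(deriv γ (t j)))
      _ = ∏ i, (-1:ℂ) * (f i (γ (t i)) * deriv γ (t i)) :=
          Finset.prod_congr rfl fun i _ => by ring
      _ = (-1:ℂ)^n * ∏ i, f i (γ (t i)) * deriv γ (t i) := by
          rw [Finset.prod_mul_distrib, Finset.prod_const, Finset.card_univ, Fintype.card_fin]
  rw [key, ← mul_assoc, ← mul_pow]
  norm_num
end

section
/- Homotopy invariance of iterated integrals: let U ⊆ ℂ be a simply connected open set, let f₁, …, f_n : U → ℂ be holomorphic, and let H : [0,1] × [0,1] → U be a C¹ map such that H(s,0) = p and H(s,1) = q for all s ∈ [0,1] (a homotopy of paths fixing the endpoints). For each s let γ_s := H(s,·). Then the function s ↦ ∫_{γ_s} f₁ dz ∘ ⋯ ∘ f_n dz is constant on [0,1]. -/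
open MeasureTheory

/-!
Write the iterated integral along `γ` as an iterated primitive,
`F_k(t) = ∫₀ᵗ f_k(γ u) γ'(u) F_{k-1}(u) du`. For a family of paths `K σ` with fixed initial
point, differentiating under the integral sign gives the first-variation formula
`∂_σ F_k = f_k(K) ∂_σK F_{k-1}`: by holomorphy of `f_k`, equality of the mixed partials of `K`
and induction, the `σ`-derivative of the integrand is the `t`-derivative of
`f_k(K) ∂_σK F_{k-1}`. If the final point is fixed too, `∂_σK = 0` at `t = 1`, so `F_n(1)` does
not depend on `σ`.

To avoid mixed partials of the merely C¹ homotopy `H`, this is used only for the straight-line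
homotopy between `H(s₀, ·)` and `H(s, ·)`; for `s` close to `s₀` its segments stay in `U` by
uniform continuity of `H`. Hence `s ↦ ∫_{γ_s}` is locally constant on `[0,1]`, so constant.
-/

open Set Function

def scaledOrderedSimplex (k : ℕ) (T : ℝ) : Set (Fin k → ℝ) :=
  {t | (∀ i, t i ∈ Icc 0 T) ∧ ∀ i j : Fin k, i ≤ j → t i ≤ t j}

theorem orderedSimplex_eq_scaledOrderedSimplex (k : ℕ) :
    orderedSimplex k = scaledOrderedSimplex k 1 := rfl

theorem isClosed_scaledOrderedSimplex (k : ℕ) (T : ℝ) :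
    IsClosed (scaledOrderedSimplex k T) := by
  simp only [scaledOrderedSimplex, ofPred_and, ofPred_forall]
  exact (isClosed_iInter fun i => isClosed_Icc.preimage (continuous_apply i)).inter
    (isClosed_iInter fun i => isClosed_iInter fun j => isClosed_iInter fun _ =>
      isClosed_le (continuous_apply i) (continuous_apply j))

theorem isCompact_scaledOrderedSimplex (k : ℕ) (T : ℝ) :
    IsCompact (scaledOrderedSimplex k T) :=
  (isCompact_univ_pi fun _ => isCompact_Icc).of_isClosed_subset
    (isClosed_scaledOrderedSimplex k T) fun _ ht i _ => ht.1 i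

theorem snoc_mem_scaledOrderedSimplex {k : ℕ} {T b : ℝ} {w : Fin k → ℝ} :
    (Fin.snoc w b : Fin (k + 1) → ℝ) ∈ scaledOrderedSimplex (k + 1) T ↔
      b ∈ Icc 0 T ∧ w ∈ scaledOrderedSimplex k b := by
  simp only [scaledOrderedSimplex, mem_ofPred_eq, Fin.forall_fin_succ', Fin.snoc_castSucc,
    Fin.snoc_last, Fin.castSucc_le_castSucc_iff, Fin.le_last, Fin.last_le_iff,
    Fin.castSucc_ne_last, false_imp_iff, true_imp_iff, implies_true, le_refl, and_true,
    forall_and, mem_Icc]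
  exact ⟨fun ⟨⟨⟨h0, hb0⟩, _, hbT⟩, hm, hle⟩ => ⟨⟨hb0, hbT⟩, ⟨h0, hle⟩, hm⟩,
    fun ⟨⟨hb0, hbT⟩, ⟨h0, hle⟩, hm⟩ => ⟨⟨⟨h0, hb0⟩, fun i => (hle i).trans hbT, hbT⟩, hm, hle⟩⟩

noncomputable def iteratedPrimitive : (k : ℕ) → (Fin k → ℝ → ℂ) → ℝ → ℂ
  | 0, _, _ => 1
  | k + 1, g, t =>
    ∫ u in (0 : ℝ)..t, g (Fin.last k) u * iteratedPrimitive k (fun i => g i.castSucc) u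

theorem continuous_iteratedPrimitive {X : Type*} [TopologicalSpace X] {k : ℕ}
    {g : X → Fin k → ℝ → ℂ} (hg : ∀ i, Continuous fun p : X × ℝ => g p.1 i p.2) :
    Continuous fun p : X × ℝ => iteratedPrimitive k (g p.1) p.2 := by
  induction k with
  | zero => exact continuous_const
  | succ k ih =>
    exact intervalIntegral.continuous_parametric_primitive_of_continuous
      (f := fun x u => g x (Fin.last k) u * iteratedPrimitive k (fun i => g x i.castSucc) u)
      ((hg _).mul (ih (g := fun x i => g x i.castSucc) fun i => hg i.castSucc))

theorem hasDerivAt_iteratedPrimitive_succ {k : ℕ} {g : Fin (k + 1) → ℝ → ℂ}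
    (hg : ∀ i, Continuous (g i)) (t : ℝ) :
    HasDerivAt (iteratedPrimitive (k + 1) g)
      (g (Fin.last k) t * iteratedPrimitive k (fun i => g i.castSucc) t) t := by
  have hprim : Continuous (iteratedPrimitive k fun i => g i.castSucc) :=
    (continuous_iteratedPrimitive (X := Unit) (g := fun _ i => g i.castSucc)
      fun i => (hg _).comp continuous_snd).comp (Continuous.prodMk_right ())
  exact ((hg _).mul hprim).integral_hasStrictDerivAt 0 t |>.hasDerivAt

theorem integral_eq_integral_snoc {E : Type*} [NormedAddCommGroup E] [NormedSpace ℝ E]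
    {k : ℕ} {F : (Fin (k + 1) → ℝ) → E} (hF : Integrable F) :
    ∫ x, F x = ∫ b : ℝ, ∫ w : Fin k → ℝ, F (Fin.snoc w b) := by
  have he := (volume_preserving_piFinSuccAbove (fun _ : Fin (k + 1) => ℝ) (Fin.last k)).symm
  have hsnoc : ∀ y : ℝ × (Fin k → ℝ),
      (MeasurableEquiv.piFinSuccAbove (fun _ => ℝ) (Fin.last k)).symm y = Fin.snoc y.2 y.1 :=
    fun y => Fin.insertNth_last' _ _
  rw [← he.integral_comp', Measure.volume_eq_prod, integral_prod]
  · simp only [hsnoc]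
  · rw [← Measure.volume_eq_prod]
    exact (he.integrable_comp_emb (MeasurableEquiv.measurableEmbedding _)).2 hF

theorem setIntegral_scaledOrderedSimplex_prod {k : ℕ} {g : Fin k → ℝ → ℂ}
    (hg : ∀ i, Continuous (g i)) {T : ℝ} (hT : 0 ≤ T) :
    ∫ t in scaledOrderedSimplex k T, ∏ i, g i (t i) = iteratedPrimitive k g T := by
  induction k generalizing T with
  | zero =>
    have huniv : scaledOrderedSimplex 0 T = univ :=
      eq_univ_of_forall fun _ => ⟨finZeroElim, finZeroElim⟩
    simp [huniv, iteratedPrimitive, measureReal_def, volume_pi]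
  | succ k ih =>
    have hS := (isClosed_scaledOrderedSimplex (k + 1) T).measurableSet
    have hint : Integrable ((scaledOrderedSimplex (k + 1) T).indicator
        fun t => ∏ i, g i (t i)) :=
      (integrable_indicator_iff hS).2 <| ContinuousOn.integrableOn_compact
        (isCompact_scaledOrderedSimplex _ _)
        (continuous_finsetProd _ fun i _ => (hg i).comp (continuous_apply i)).continuousOn
    have hslice : ∀ b, ∫ w : Fin k → ℝ, (scaledOrderedSimplex (k + 1) T).indicator
          (fun t => ∏ i, g i (t i)) (Fin.snoc w b) =
        (Icc 0 T).indicator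
          (fun b => g (Fin.last k) b * iteratedPrimitive k (fun i => g i.castSucc) b) b := by
      intro b
      by_cases hb : b ∈ Icc 0 T
      · have hw : ∀ w : Fin k → ℝ, (scaledOrderedSimplex (k + 1) T).indicator
              (fun t => ∏ i, g i (t i)) (Fin.snoc w b) =
            g (Fin.last k) b * (scaledOrderedSimplex k b).indicator
              (fun w => ∏ i, g i.castSucc (w i)) w := by
          intro w
          by_cases hw : w ∈ scaledOrderedSimplex k b
          · rw [indicator_of_mem (snoc_mem_scaledOrderedSimplex.2 ⟨hb, hw⟩),
              indicator_of_mem hw, Fin.prod_univ_castSucc]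
            simp only [Fin.snoc_castSucc, Fin.snoc_last, mul_comm]
          · rw [indicator_of_notMem (mt (fun h => (snoc_mem_scaledOrderedSimplex.1 h).2) hw),
              indicator_of_notMem hw, mul_zero]
        rw [indicator_of_mem hb, integral_congr_ae (ae_of_all _ hw), integral_const_mul,
          integral_indicator (isClosed_scaledOrderedSimplex k b).measurableSet,
          ih (fun i => hg _) hb.1]
      · rw [indicator_of_notMem hb]
        refine integral_eq_zero_of_ae (ae_of_all _ fun w => indicator_of_notMem ?_ _)
        exact fun h => hb (snoc_mem_scaledOrderedSimplex.1 h).1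
    rw [← integral_indicator hS, integral_eq_integral_snoc hint, funext hslice,
      integral_indicator measurableSet_Icc, integral_Icc_eq_integral_Ioc,
      ← intervalIntegral.integral_of_le hT]
    rfl

theorem iteratedPathIntegral_eq_iteratedPrimitive {n : ℕ} {γ : ℝ → ℂ} {f : Fin n → ℂ → ℂ}
    {g : Fin n → ℝ → ℂ} (hg : ∀ i, Continuous (g i))
    (hfg : ∀ i, ∀ t ∈ Ioo 0 1, f i (γ t) * deriv γ t = g i t) :
    iteratedPathIntegral n γ f = iteratedPrimitive n g 1 := by
  rw [iteratedPathIntegral, orderedSimplex_eq_scaledOrderedSimplex,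
    ← setIntegral_scaledOrderedSimplex_prod hg zero_le_one]
  have hinterior : ∀ᵐ t : Fin n → ℝ, ∀ i, t i ≠ 0 ∧ t i ≠ 1 :=
    ae_all_iff.2 fun i => (Measure.ae_eval_ne _ i 0).and (Measure.ae_eval_ne _ i 1)
  refine setIntegral_congr_ae (isClosed_scaledOrderedSimplex n 1).measurableSet ?_
  filter_upwards [hinterior] with t ht hmem
  refine Finset.prod_congr rfl fun i _ => hfg i (t i) ?_
  exact ⟨(hmem.1 i).1.lt_of_ne' (ht i).1, (hmem.1 i).2.lt_of_ne (ht i).2⟩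

theorem hasDerivAt_intervalIntegral_of_continuous {E : Type*} [NormedAddCommGroup E]
    [NormedSpace ℝ E] {F F' : ℝ → ℝ → E} {S : Set ℝ} (hS : IsOpen S) {σ₀ a b : ℝ}
    (hσ₀ : σ₀ ∈ S) (hF : Continuous (uncurry F)) (hF' : Continuous (uncurry F'))
    (hderiv : ∀ σ ∈ S, ∀ u ∈ uIoc a b, HasDerivAt (F · u) (F' σ u) σ) :
    HasDerivAt (fun σ => ∫ u in a..b, F σ u) (∫ u in a..b, F' σ₀ u) σ₀ := by
  obtain ⟨ε, hε, hεS⟩ := Metric.nhds_basis_closedBall.mem_iff.1 (hS.mem_nhds hσ₀)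
  obtain ⟨C, hC⟩ := ((isCompact_closedBall σ₀ ε).prod isCompact_uIcc).exists_bound_of_continuousOn
    hF'.continuousOn
  have hslice : ∀ {G : ℝ → ℝ → E}, Continuous (uncurry G) → ∀ σ, Continuous (G σ) :=
    fun hG σ => hG.comp (Continuous.prodMk_right σ)
  refine (intervalIntegral.hasDerivAt_integral_of_dominated_loc_of_deriv_le
    (bound := fun _ => C) (Metric.closedBall_mem_nhds σ₀ hε)
    (.of_forall fun σ => (hslice hF σ).aestronglyMeasurable)
    ((hslice hF σ₀).intervalIntegrable a b) (hslice hF' σ₀).aestronglyMeasurable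
    (ae_of_all _ fun u hu σ hσ => hC (σ, u) ⟨hσ, uIoc_subset_uIcc hu⟩)
    intervalIntegrable_const
    (ae_of_all _ fun u hu σ hσ => hderiv σ (hεS hσ) u hu)).2

theorem hasDerivAt_intervalIntegral_of_deriv_eq_deriv {E : Type*} [NormedAddCommGroup E]
    [NormedSpace ℝ E] [CompleteSpace E] {F Λ : ℝ → ℝ → E} {R : ℝ → E} {S : Set ℝ}
    (hS : IsOpen S) {σ₀ a t : ℝ} (hσ₀ : σ₀ ∈ S) (hat : a ≤ t) (hF : Continuous (uncurry F))
    (hΛ : Continuous (uncurry Λ)) (hR : ContinuousOn R (Icc a t))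
    (hFΛ : ∀ σ ∈ S, ∀ u ∈ Ioc a t, HasDerivAt (F · u) (Λ σ u) σ)
    (hRΛ : ∀ u ∈ Ioo a t, HasDerivAt R (Λ σ₀ u) u) (hRa : R a = 0) :
    HasDerivAt (fun σ => ∫ u in a..t, F σ u) (R t) σ₀ := by
  have h := hasDerivAt_intervalIntegral_of_continuous hS hσ₀ hF hΛ fun σ hσ u hu =>
    hFΛ σ hσ u (by rwa [uIoc_of_le hat] at hu)
  rwa [intervalIntegral.integral_eq_sub_of_hasDerivAt_of_le hat hR hRΛ
    ((hΛ.comp (Continuous.prodMk_right σ₀)).intervalIntegrable _ _), hRa, sub_zero] at h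

-- `w'` is the common value of the mixed partials `∂_σ∂ₜK = ∂ₜ∂_σK`.
structure IsPathVariation (U : Set ℂ) (S : Set ℝ) (K v w w' : ℝ → ℝ → ℂ) : Prop where
  mapsTo : ∀ σ t, K σ t ∈ U
  continuous_path : Continuous (uncurry K)
  continuous_velocity : Continuous (uncurry v)
  continuous_variation : Continuous (uncurry w)
  continuous_variation_deriv : Continuous (uncurry w')
  hasDerivAt_path_param : ∀ σ ∈ S, ∀ t ∈ Icc (0 : ℝ) 1, HasDerivAt (K · t) (w σ t) σ
  hasDerivAt_velocity_param : ∀ σ ∈ S, ∀ t ∈ Icc (0 : ℝ) 1, HasDerivAt (v · t) (w' σ t) σ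
  hasDerivAt_path : ∀ σ ∈ S, ∀ t ∈ Ioo (0 : ℝ) 1, HasDerivAt (K σ) (v σ t) t
  hasDerivAt_variation : ∀ σ ∈ S, ∀ t ∈ Ioo (0 : ℝ) 1, HasDerivAt (w σ) (w' σ t) t

noncomputable def pathPrimitive (K v : ℝ → ℝ → ℂ) (k : ℕ) (f : Fin k → ℂ → ℂ) (σ t : ℝ) : ℂ :=
  iteratedPrimitive k (fun i u => f i (K σ u) * v σ u) t

-- Along an `IsPathVariation U S K v w w'`, the `t`- and `σ`-derivatives of
-- `pathPrimitive K v k f` are `v` resp. `w` times this.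
noncomputable def pathPrimitiveCoeff (K v : ℝ → ℝ → ℂ) :
    (k : ℕ) → (Fin k → ℂ → ℂ) → ℝ → ℝ → ℂ
  | 0, _, _, _ => 0
  | k + 1, f, σ, t => f (Fin.last k) (K σ t) * pathPrimitive K v k (fun i => f i.castSucc) σ t

namespace IsPathVariation

variable {U : Set ℂ} {S : Set ℝ} {K v w w' : ℝ → ℝ → ℂ}

theorem continuous_comp (h : IsPathVariation U S K v w w') {φ : ℂ → ℂ}
    (hφ : ContinuousOn φ U) : Continuous fun p : ℝ × ℝ => φ (K p.1 p.2) :=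
  hφ.comp_continuous h.continuous_path fun p => h.mapsTo p.1 p.2

theorem continuous_pathPrimitive (h : IsPathVariation U S K v w w') {k : ℕ}
    {f : Fin k → ℂ → ℂ} (hf : ∀ i, ContinuousOn (f i) U) :
    Continuous (uncurry (pathPrimitive K v k f)) :=
  continuous_iteratedPrimitive (g := fun σ i u => f i (K σ u) * v σ u) fun i =>
    (h.continuous_comp (hf i)).mul h.continuous_velocity

theorem continuous_pathPrimitiveCoeff (h : IsPathVariation U S K v w w') {k : ℕ}
    {f : Fin k → ℂ → ℂ} (hf : ∀ i, ContinuousOn (f i) U) :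
    Continuous (uncurry (pathPrimitiveCoeff K v k f)) := by
  cases k with
  | zero => exact continuous_const
  | succ k =>
    exact (h.continuous_comp (hf _)).mul (h.continuous_pathPrimitive fun i => hf i.castSucc)

theorem hasDerivAt_pathPrimitive (h : IsPathVariation U S K v w w') {k : ℕ}
    {f : Fin k → ℂ → ℂ} (hf : ∀ i, ContinuousOn (f i) U) (σ t : ℝ) :
    HasDerivAt (pathPrimitive K v k f σ) (v σ t * pathPrimitiveCoeff K v k f σ t) t := by
  cases k with
  | zero =>
    show HasDerivAt (fun _ => (1 : ℂ)) (v σ t * 0) t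
    simpa using hasDerivAt_const t (1 : ℂ)
  | succ k =>
    show HasDerivAt (iteratedPrimitive (k + 1) fun i u => f i (K σ u) * v σ u) _ t
    refine (hasDerivAt_iteratedPrimitive_succ (fun i => ?_) t).congr_deriv ?_
    · exact ((h.continuous_comp (hf i)).mul h.continuous_velocity).comp
        (Continuous.prodMk_right σ)
    · simp only [pathPrimitiveCoeff, pathPrimitive]
      ring

theorem hasDerivAt_pathPrimitive_param (h : IsPathVariation U S K v w w') (hU : IsOpen U)
    (hS : IsOpen S) (hw0 : ∀ σ ∈ S, w σ 0 = 0) {k : ℕ} {f : Fin k → ℂ → ℂ}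
    (hf : ∀ i, DifferentiableOn ℂ (f i) U) {σ t : ℝ} (hσ : σ ∈ S) (ht : t ∈ Icc (0 : ℝ) 1) :
    HasDerivAt (pathPrimitive K v k f · t) (w σ t * pathPrimitiveCoeff K v k f σ t) σ := by
  induction k generalizing σ t with
  | zero =>
    show HasDerivAt (fun _ => (1 : ℂ)) (w σ t * 0) σ
    simpa using hasDerivAt_const σ (1 : ℂ)
  | succ k ih =>
    set g := f (Fin.last k)
    set f' : Fin k → ℂ → ℂ := fun i => f i.castSucc
    have hg : DifferentiableOn ℂ g U := hf _
    have hf' : ∀ i, ContinuousOn (f' i) U := fun i => (hf _).continuousOn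
    set P := pathPrimitive K v k f'
    set Q := pathPrimitiveCoeff K v k f'
    have hgK : ∀ σ u, HasDerivAt g (deriv g (K σ u)) (K σ u) := fun σ u =>
      (hg.differentiableAt (hU.mem_nhds (h.mapsTo σ u))).hasDerivAt
    set Λ : ℝ → ℝ → ℂ := fun σ u =>
      (deriv g (K σ u) * w σ u * v σ u + g (K σ u) * w' σ u) * P σ u +
        g (K σ u) * v σ u * (w σ u * Q σ u)
    have hgK_cont := h.continuous_comp hg.continuousOn
    have hP := h.continuous_pathPrimitive hf'
    have hv := h.continuous_velocity
    have hw := h.continuous_variation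
    have hΛ : Continuous (uncurry Λ) :=
      ((((h.continuous_comp (hg.deriv hU).continuousOn).mul hw).mul hv).add
        (hgK_cont.mul h.continuous_variation_deriv)).mul hP |>.add <|
        (hgK_cont.mul hv).mul (hw.mul (h.continuous_pathPrimitiveCoeff hf'))
    refine (hasDerivAt_intervalIntegral_of_deriv_eq_deriv
      (F := fun σ u => g (K σ u) * v σ u * P σ u) (R := fun u => g (K σ u) * w σ u * P σ u)
      hS hσ ht.1 ((hgK_cont.mul hv).mul hP) hΛ
      (((hgK_cont.mul hw).mul hP).comp (Continuous.prodMk_right σ)).continuousOn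
      (fun σ hσ u hu => ?_) (fun u hu => ?_) (by simp [hw0 σ hσ])).congr_deriv
      (by simp only [pathPrimitiveCoeff, P, g]; ring)
    · have hu' : u ∈ Icc (0 : ℝ) 1 := ⟨hu.1.le, hu.2.trans ht.2⟩
      exact ((((hgK σ u).comp σ (h.hasDerivAt_path_param σ hσ u hu')).mul
        (h.hasDerivAt_velocity_param σ hσ u hu')).mul (ih (fun i => hf _) hσ hu')).congr_deriv
        (by simp only [Λ, P, Q, g, Function.comp_apply, Pi.mul_apply]; ring)
    · have hu' : u ∈ Ioo (0 : ℝ) 1 := ⟨hu.1, hu.2.trans_le ht.2⟩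
      exact ((((hgK σ u).comp u (h.hasDerivAt_path σ hσ u hu')).mul
        (h.hasDerivAt_variation σ hσ u hu')).mul (h.hasDerivAt_pathPrimitive hf' σ u)).congr_deriv
        (by simp only [Λ, P, Q, g, Function.comp_apply, Pi.mul_apply]; ring)

theorem iteratedPathIntegral_eq_pathPrimitive (h : IsPathVariation U S K v w w') {n : ℕ}
    {f : Fin n → ℂ → ℂ} (hf : ∀ i, ContinuousOn (f i) U) {γ : ℝ → ℂ} {σ : ℝ}
    (hγ : ∀ t ∈ Ioo (0 : ℝ) 1, K σ t = γ t ∧ HasDerivAt γ (v σ t) t) :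
    iteratedPathIntegral n γ f = pathPrimitive K v n f σ 1 :=
  iteratedPathIntegral_eq_iteratedPrimitive
    (fun i => ((h.continuous_comp (hf i)).mul h.continuous_velocity).comp
      (Continuous.prodMk_right σ))
    fun i t ht => by rw [(hγ t ht).1, (hγ t ht).2.deriv]

theorem pathPrimitive_zero_eq_one (h : IsPathVariation U (Ioo 0 1) K v w w') (hU : IsOpen U)
    (hw0 : ∀ σ ∈ Ioo (0 : ℝ) 1, w σ 0 = 0) (hw1 : ∀ σ ∈ Ioo (0 : ℝ) 1, w σ 1 = 0) {n : ℕ}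
    {f : Fin n → ℂ → ℂ} (hf : ∀ i, DifferentiableOn ℂ (f i) U) :
    pathPrimitive K v n f 0 1 = pathPrimitive K v n f 1 1 := by
  have hcont : Continuous (pathPrimitive K v n f · 1) :=
    (h.continuous_pathPrimitive fun i => (hf i).continuousOn).comp
      (continuous_id.prodMk continuous_const)
  have hderiv : ∀ σ ∈ Ioo (0 : ℝ) 1, HasDerivAt (pathPrimitive K v n f · 1) 0 σ :=
    fun σ hσ => by
      simpa [hw1 σ hσ] using
        h.hasDerivAt_pathPrimitive_param hU isOpen_Ioo hw0 hf hσ (right_mem_Icc.2 zero_le_one)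
  have := intervalIntegral.integral_eq_sub_of_hasDerivAt_of_le zero_le_one hcont.continuousOn
    hderiv intervalIntegrable_const
  rwa [intervalIntegral.integral_zero, eq_comm, sub_eq_zero, eq_comm] at this

end IsPathVariation

theorem IccExtend_coe_eventuallyEq {α : Type*} {a b t : ℝ} (h : a ≤ b) (c : ℝ → α)
    (ht : t ∈ Ioo a b) : IccExtend h (fun s : Icc a b => c s) =ᶠ[nhds t] c :=
  Filter.eventually_of_mem (Ioo_mem_nhds ht.1 ht.2) fun _ hu =>
    IccExtend_of_mem h _ (Ioo_subset_Icc_self hu)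

-- `σ` is clamped to `[0,1]` so that `K σ t` stays on the segment for every `σ`.
theorem isPathVariation_segment {U : Set ℂ} {c₀ c₁ d₀ d₁ : ℝ → ℂ} (hc₀ : Continuous c₀)
    (hc₁ : Continuous c₁) (hd₀ : Continuous d₀) (hd₁ : Continuous d₁)
    (hder₀ : ∀ t ∈ Ioo (0 : ℝ) 1, HasDerivAt c₀ (d₀ t) t)
    (hder₁ : ∀ t ∈ Ioo (0 : ℝ) 1, HasDerivAt c₁ (d₁ t) t)
    (hseg : ∀ t, segment ℝ (c₀ t) (c₁ t) ⊆ U) :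
    IsPathVariation U (Ioo 0 1)
      (fun σ t => c₀ t + (projIcc 0 1 zero_le_one σ : ℝ) • (c₁ t - c₀ t))
      (fun σ t => d₀ t + (projIcc 0 1 zero_le_one σ : ℝ) • (d₁ t - d₀ t))
      (fun _ t => c₁ t - c₀ t) (fun _ t => d₁ t - d₀ t) := by
  have hproj : ∀ σ ∈ Ioo (0 : ℝ) 1, (fun σ => (projIcc 0 1 zero_le_one σ : ℝ)) =ᶠ[nhds σ] id :=
    fun σ hσ => IccExtend_coe_eventuallyEq zero_le_one id hσ
  have hline : ∀ (x y : ℂ), ∀ σ ∈ Ioo (0 : ℝ) 1,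
      HasDerivAt (fun σ => x + (projIcc 0 1 zero_le_one σ : ℝ) • (y - x)) (y - x) σ :=
    fun x y σ hσ => by
      refine ((((hasDerivAt_id σ).smul_const (y - x)).const_add x).congr_deriv
        (one_smul _ _)).congr_of_eventuallyEq ?_
      filter_upwards [hproj σ hσ] with θ hθ
      rw [hθ, id]
  refine ⟨fun σ t => hseg t ?_, by fun_prop, by fun_prop, by fun_prop, by fun_prop,
    fun σ hσ t _ => hline _ _ σ hσ, fun σ hσ t _ => hline _ _ σ hσ,
    fun σ _ t ht => (hder₀ t ht).add (((hder₁ t ht).sub (hder₀ t ht)).const_smul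
      (projIcc 0 1 zero_le_one σ : ℝ) :),
    fun σ _ t ht => (hder₁ t ht).sub (hder₀ t ht)⟩
  rw [segment_eq_image']
  exact ⟨_, (projIcc 0 1 zero_le_one σ).2, rfl⟩

theorem iteratedPathIntegral_eq_of_segment_subset {U : Set ℂ} (hU : IsOpen U) {n : ℕ}
    {f : Fin n → ℂ → ℂ} (hf : ∀ i, DifferentiableOn ℂ (f i) U) {c₀ c₁ : ℝ → ℂ}
    (hc₀ : ContDiffOn ℝ 1 c₀ (Icc 0 1)) (hc₁ : ContDiffOn ℝ 1 c₁ (Icc 0 1))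
    (h0 : c₀ 0 = c₁ 0) (h1 : c₀ 1 = c₁ 1)
    (hseg : ∀ t ∈ Icc (0 : ℝ) 1, segment ℝ (c₀ t) (c₁ t) ⊆ U) :
    iteratedPathIntegral n c₀ f = iteratedPathIntegral n c₁ f := by
  let E : (ℝ → ℂ) → ℝ → ℂ := fun c => IccExtend zero_le_one fun s : Icc (0 : ℝ) 1 => c s
  let D : (ℝ → ℂ) → ℝ → ℂ := fun c => E (derivWithin c (Icc 0 1))
  have hE : ∀ {c}, ContinuousOn c (Icc 0 1) → Continuous (E c) :=
    fun hc => hc.domRestrict.Icc_extend'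
  have hE_mem : ∀ c, ∀ t ∈ Icc (0 : ℝ) 1, E c t = c t := fun c t ht => IccExtend_of_mem _ _ ht
  have hD : ∀ {c}, ContDiffOn ℝ 1 c (Icc 0 1) → Continuous (D c) :=
    fun hc => hE (hc.continuousOn_derivWithin (uniqueDiffOn_Icc zero_lt_one) le_rfl)
  have hderiv : ∀ {c}, ContDiffOn ℝ 1 c (Icc 0 1) →
      ∀ t ∈ Ioo (0 : ℝ) 1, HasDerivAt c (D c t) t := fun {c} hc t ht => by
    have ht' := Icc_mem_nhds ht.1 ht.2
    change HasDerivAt c (E (derivWithin c (Icc 0 1)) t) t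
    rw [hE_mem _ t (Ioo_subset_Icc_self ht), derivWithin_of_mem_nhds ht']
    exact ((hc.differentiableOn one_ne_zero t (Ioo_subset_Icc_self ht)).differentiableAt
      ht').hasDerivAt
  have hE_deriv : ∀ {c}, ContDiffOn ℝ 1 c (Icc 0 1) →
      ∀ t ∈ Ioo (0 : ℝ) 1, HasDerivAt (E c) (D c t) t := fun hc t ht =>
    (hderiv hc t ht).congr_of_eventuallyEq (IccExtend_coe_eventuallyEq _ _ ht)
  have hvar := isPathVariation_segment (hE hc₀.continuousOn) (hE hc₁.continuousOn) (hD hc₀)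
    (hD hc₁) (hE_deriv hc₀) (hE_deriv hc₁) fun t => hseg _ (projIcc 0 1 zero_le_one t).2
  have hf' := fun i => (hf i).continuousOn
  have hstart : iteratedPathIntegral n c₀ f = pathPrimitive _ _ n f 0 1 :=
    hvar.iteratedPathIntegral_eq_pathPrimitive hf' fun t ht => by
      simp [hE_mem _ t (Ioo_subset_Icc_self ht), hderiv hc₀ t ht]
  have hend : iteratedPathIntegral n c₁ f = pathPrimitive _ _ n f 1 1 :=
    hvar.iteratedPathIntegral_eq_pathPrimitive hf' fun t ht => by
      simp [hE_mem _ t (Ioo_subset_Icc_self ht), hderiv hc₁ t ht]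
  rw [hstart, hend,
    hvar.pathPrimitive_zero_eq_one hU (fun _ _ => by simp [E, h0]) (fun _ _ => by simp [E, h1]) hf]

theorem iteratedPathIntegral_homotopy_invariant_general
    (U : Set ℂ) (hUopen : IsOpen U)
    (n : ℕ) (f : Fin n → ℂ → ℂ) (hf : ∀ i, DifferentiableOn ℂ (f i) U)
    (H : ℝ × ℝ → ℂ) (hH : ContDiffOn ℝ 1 H (Set.Icc 0 1 ×ˢ Set.Icc 0 1))
    (hHU : ∀ x ∈ Set.Icc (0 : ℝ) 1 ×ˢ Set.Icc (0 : ℝ) 1, H x ∈ U)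
    (p q : ℂ)
    (hH0 : ∀ s ∈ Set.Icc (0 : ℝ) 1, H (s, 0) = p)
    (hH1 : ∀ s ∈ Set.Icc (0 : ℝ) 1, H (s, 1) = q) :
    ∀ s₁ ∈ Set.Icc (0 : ℝ) 1, ∀ s₂ ∈ Set.Icc (0 : ℝ) 1,
      iteratedPathIntegral n (fun t => H (s₁, t)) f =
        iteratedPathIntegral n (fun t => H (s₂, t)) f := by
  set Q := Icc (0 : ℝ) 1 ×ˢ Icc (0 : ℝ) 1
  have hQ : IsCompact Q := isCompact_Icc.prod isCompact_Icc
  obtain ⟨r, hr, hrU⟩ := (hQ.image_of_continuousOn hH.continuousOn).exists_thickening_subset_open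
    hUopen (image_subset_iff.2 hHU)
  obtain ⟨δ, hδ, hHδ⟩ := Metric.uniformContinuousOn_iff.1
    (hQ.uniformContinuousOn_of_continuous hH.continuousOn) r hr
  have hpath : ∀ s ∈ Icc (0 : ℝ) 1, ContDiffOn ℝ 1 (fun t => H (s, t)) (Icc 0 1) :=
    fun s hs => hH.comp (contDiff_prodMk_right s).contDiffOn fun _ ht => ⟨hs, ht⟩
  have hnear : ∀ s₀ ∈ Icc (0 : ℝ) 1, ∀ s ∈ Icc (0 : ℝ) 1, dist s s₀ < δ →
      iteratedPathIntegral n (fun t => H (s, t)) f =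
        iteratedPathIntegral n (fun t => H (s₀, t)) f := fun s₀ hs₀ s hs hss₀ =>
    iteratedPathIntegral_eq_of_segment_subset hUopen hf (hpath s hs) (hpath s₀ hs₀)
      (by rw [hH0 s hs, hH0 s₀ hs₀]) (by rw [hH1 s hs, hH1 s₀ hs₀]) fun t ht =>
      ((convex_ball (H (s₀, t)) r).segment_subset
        (hHδ _ ⟨hs, ht⟩ _ ⟨hs₀, ht⟩ (by simpa [Prod.dist_eq] using hss₀))
        (Metric.mem_ball_self hr)).trans <|
        (Metric.ball_subset_thickening (mem_image_of_mem H (show (s₀, t) ∈ Q from ⟨hs₀, ht⟩))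
          r).trans hrU
  have hlc : IsLocallyConstant fun s : Icc (0 : ℝ) 1 =>
      iteratedPathIntegral n (fun t => H (s, t)) f :=
    (IsLocallyConstant.iff_eventually_eq _).2 fun s₀ =>
      Metric.eventually_nhds_iff.2 ⟨δ, hδ, fun s hs => hnear s₀ s₀.2 s s.2 hs⟩
  exact fun s₁ hs₁ s₂ hs₂ => hlc.apply_eq_of_preconnectedSpace ⟨s₁, hs₁⟩ ⟨s₂, hs₂⟩

/-- **Homotopy invariance of iterated integrals**: let `U ⊆ ℂ` be a simply connected open
set, `f₁, …, f_n` holomorphic on `U`, and `H : [0,1] × [0,1] → U` a C¹ homotopy of paths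
fixing the endpoints (`H (s, 0) = p` and `H (s, 1) = q` for all `s`).  Then the iterated
integral of `f₁ dz ∘ ⋯ ∘ f_n dz` along `γ_s := H (s, ·)` does not depend on `s ∈ [0,1]`. -/
theorem iteratedPathIntegral_homotopy_invariant
    (U : Set ℂ) (hUopen : IsOpen U) (hUsc : SimplyConnectedSpace U)
    (n : ℕ) (f : Fin n → ℂ → ℂ) (hf : ∀ i, DifferentiableOn ℂ (f i) U)
    (H : ℝ × ℝ → ℂ) (hH : ContDiffOn ℝ 1 H (Set.Icc 0 1 ×ˢ Set.Icc 0 1))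
    (hHU : ∀ x ∈ Set.Icc (0 : ℝ) 1 ×ˢ Set.Icc (0 : ℝ) 1, H x ∈ U)
    (p q : ℂ)
    (hH0 : ∀ s ∈ Set.Icc (0 : ℝ) 1, H (s, 0) = p)
    (hH1 : ∀ s ∈ Set.Icc (0 : ℝ) 1, H (s, 1) = q) :
    ∀ s₁ ∈ Set.Icc (0 : ℝ) 1, ∀ s₂ ∈ Set.Icc (0 : ℝ) 1,
      iteratedPathIntegral n (fun t => H (s₁, t)) f =
        iteratedPathIntegral n (fun t => H (s₂, t)) f :=
  iteratedPathIntegral_homotopy_invariant_general U hUopen n f hf H hH hHU p q hH0 hH1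
end

section
/- Let A be a finite-dimensional commutative local ℂ-algebra with maximal ideal m and residue field ℂ, regarded as a normed ℂ-algebra. Let ε > 0, γ(t) = ε·e^{2πit}, and let ν ∈ ℤ, a₀ ∈ Aˣ, and a_{−N}, …, a_{−1}, a₁, …, a_M ∈ m. Define h : [0,1] → Aˣ by h(t) = a₀·γ(t)^ν·∏_{j=1}^{N}(1 − a_{−j}γ(t)^{−j})·∏_{j=1}^{M}(1 − a_jγ(t)^{j}) (each factor is invertible since a_{±j} are nilpotent). Then ∫_0^1 h'(t)·h(t)⁻¹ dt = 2πi·ν. -/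
/-!
The integrand `h' h⁻¹` is the derivative of a logarithm `F` of `h`, built factor by factor:
`0` for `a₀`, `2πiνt` for `γ(t)^ν`, and for each factor `1 - x(t)` with `x(t)` nilpotent the
truncated series `-∑ x(t)^i / i`, exact because `(1 - x) ∑_{i<n} x^i = 1 - x^n = 1`. These
series are Laurent polynomials in `γ(t)`, hence `1`-periodic, so `F 1 - F 0 = 2πiν`.
-/

open MeasureTheory intervalIntegral

/-- The circle of radius `ε` around `0`, parametrized by `t ↦ ε e^{2πit}`. -/
noncomputable def circlePath (ε : ℝ) : ℝ → ℂ :=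
  fun t => (ε : ℂ) * Complex.exp (2 * Real.pi * Complex.I * (t : ℂ))

open Finset Complex Real

section IsLogOf

variable {A : Type*} [NormedCommRing A] [NormedAlgebra ℝ A]

/-- The differential form of `h = c · exp F`. -/
def IsLogOf (F h : ℝ → A) : Prop :=
  ContDiff ℝ 1 F ∧ ∀ t, HasDerivAt h (deriv F t * h t) t

theorem isLogOf_const (c : A) : IsLogOf 0 fun _ => c :=
  ⟨contDiff_const, fun t => by simpa using hasDerivAt_const t c⟩

theorem IsLogOf.mul {F G f g : ℝ → A} (hf : IsLogOf F f) (hg : IsLogOf G g) :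
    IsLogOf (F + G) (f * g) := by
  refine ⟨hf.1.add hg.1, fun t => ?_⟩
  rw [deriv_add (hf.1.differentiable one_ne_zero t) (hg.1.differentiable one_ne_zero t)]
  convert (hf.2 t).mul (hg.2 t) using 1
  simp only [Pi.mul_apply]
  ring

theorem IsLogOf.finset_prod {ι : Type*} (s : Finset ι) {F f : ι → ℝ → A}
    (h : ∀ i ∈ s, IsLogOf (F i) (f i)) : IsLogOf (∑ i ∈ s, F i) (∏ i ∈ s, f i) := by
  induction s using Finset.cons_induction with
  | empty => exact isLogOf_const 1
  | cons i s hi ih =>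
    rw [sum_cons, prod_cons]
    exact (h i (mem_cons_self i s)).mul (ih fun j hj => h j (mem_cons_of_mem hj))

theorem IsLogOf.integral_deriv_mul_inverse [CompleteSpace A] {F h : ℝ → A} (hF : IsLogOf F h)
    (hunit : ∀ t, IsUnit (h t)) (a b : ℝ) :
    ∫ t in a..b, deriv h t * Ring.inverse (h t) = F b - F a := by
  have hlogDeriv (t : ℝ) : deriv h t * Ring.inverse (h t) = deriv F t := by
    rw [(hF.2 t).deriv, mul_assoc, Ring.mul_inverse_cancel _ (hunit t), mul_one]
  simp only [hlogDeriv]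
  exact integral_deriv_eq_sub (fun t _ => hF.1.differentiable one_ne_zero t)
    ((hF.1.continuous_deriv le_rfl).intervalIntegrable a b)

theorem IsLogOf.algebraMap_comp {𝕜 : Type*} [NormedField 𝕜] [NormedAlgebra ℝ 𝕜]
    [NormedAlgebra 𝕜 A] [IsScalarTower ℝ 𝕜 A] {F f : ℝ → 𝕜} (hf : IsLogOf F f) :
    IsLogOf (fun t => algebraMap 𝕜 A (F t)) (fun t => algebraMap 𝕜 A (f t)) := by
  have hφ {g : ℝ → 𝕜} {g' : 𝕜} {t : ℝ} (hg : HasDerivAt g g' t) :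
      HasDerivAt (fun t => algebraMap 𝕜 A (g t)) (algebraMap 𝕜 A g') t :=
    ((algebraMapCLM 𝕜 A).restrictScalars ℝ).hasFDerivAt.comp_hasDerivAt t hg
  refine ⟨((algebraMapCLM 𝕜 A).restrictScalars ℝ).contDiff.comp hf.1, fun t => ?_⟩
  rw [(hφ (hf.1.differentiable one_ne_zero t).hasDerivAt).deriv, ← map_mul]
  exact hφ (hf.2 t)

/-- The power series of `log (1 - x)`, truncated after `x ^ n`. -/
noncomputable def nilLog (n : ℕ) (x : A) : A :=
  -∑ i ∈ range n, ((i : ℝ) + 1)⁻¹ • x ^ (i + 1)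

theorem HasDerivAt.nilLog {u : ℝ → A} {u' : A} {t : ℝ} (hu : HasDerivAt u u' t) (n : ℕ) :
    HasDerivAt (fun s => nilLog n (u s)) (-((∑ i ∈ range n, u t ^ i) * u')) t := by
  unfold _root_.nilLog
  refine (HasDerivAt.fun_sum fun i _ => (hu.pow (i + 1)).const_smul ((i : ℝ) + 1)⁻¹).neg
    |>.congr_deriv ?_
  rw [sum_mul]
  refine congrArg _ (sum_congr rfl fun i _ => ?_)
  rw [Nat.add_sub_cancel, mul_assoc, ← nsmul_eq_mul, ← Nat.cast_smul_eq_nsmul ℝ, Nat.cast_succ,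
    inv_smul_smul₀ (Nat.cast_add_one_ne_zero i)]

theorem isLogOf_one_sub_of_pow_eq_zero {u : ℝ → A} {n : ℕ} (hu : ContDiff ℝ 1 u)
    (hn : ∀ t, u t ^ n = 0) : IsLogOf (fun t => nilLog n (u t)) (fun t => 1 - u t) := by
  refine ⟨by unfold nilLog; fun_prop, fun t => ?_⟩
  have hut := (hu.differentiable one_ne_zero t).hasDerivAt
  rw [(hut.nilLog n).deriv]
  refine hut.const_sub 1 |>.congr_deriv ?_
  have hgeom : (1 - u t) * ∑ i ∈ range n, u t ^ i = 1 := by rw [mul_neg_geom_sum, hn, sub_zero]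
  linear_combination deriv u t * hgeom

end IsLogOf

@[fun_prop]
theorem contDiff_ofReal {n : WithTop ℕ∞} : ContDiff ℝ n ((↑) : ℝ → ℂ) :=
  ofRealCLM.contDiff

theorem circlePath_zpow (ε : ℝ) (k : ℤ) (t : ℝ) :
    circlePath ε t ^ k = (ε : ℂ) ^ k * exp (2 * π * I * k * t) := by
  rw [circlePath, mul_zpow, ← exp_int_mul]
  ring_nf

theorem contDiff_circlePath_zpow (ε : ℝ) (k : ℤ) {n : WithTop ℕ∞} :
    ContDiff ℝ n fun t => circlePath ε t ^ k := by
  simp only [circlePath_zpow]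
  fun_prop

theorem isLogOf_circlePath_zpow (ε : ℝ) (k : ℤ) :
    IsLogOf (fun t : ℝ => 2 * π * I * k * t) (fun t => circlePath ε t ^ k) := by
  have hlin (t : ℝ) : HasDerivAt (fun t : ℝ => 2 * π * I * k * t) (2 * π * I * k) t := by
    simpa using ((hasDerivAt_id (t : ℂ)).const_mul (2 * π * I * k)).comp_ofReal
  refine ⟨?_, fun t => ?_⟩
  · fun_prop
  · rw [(hlin t).deriv]
    simp only [circlePath_zpow]
    convert ((hlin t).cexp.const_mul ((ε : ℂ) ^ k)) using 1
    ring

theorem circlePath_one (ε : ℝ) : circlePath ε 1 = circlePath ε 0 := by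
  simp [circlePath, exp_two_pi_mul_I]

theorem circlePath_ne_zero {ε : ℝ} (hε : ε ≠ 0) (t : ℝ) : circlePath ε t ≠ 0 :=
  mul_ne_zero (ofReal_ne_zero.2 hε) (exp_ne_zero _)

theorem isLogOf_one_sub_mul_circlePath_zpow {A : Type*} [NormedCommRing A] [NormedAlgebra ℂ A]
    {a : A} {n : ℕ} (ha : a ^ n = 0) (ε : ℝ) (k : ℤ) :
    IsLogOf (fun t => nilLog n (a * algebraMap ℂ A (circlePath ε t ^ k)))
      (fun t => 1 - a * algebraMap ℂ A (circlePath ε t ^ k)) :=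
  isLogOf_one_sub_of_pow_eq_zero
    (contDiff_const.mul (((algebraMapCLM ℂ A).restrictScalars ℝ).contDiff.comp
      (contDiff_circlePath_zpow ε k)))
    fun t => by rw [mul_pow, ha, zero_mul]

theorem IsLocalRing.isNilpotent_of_mem_maximalIdeal {A : Type*} [CommRing A] [IsArtinianRing A]
    [IsLocalRing A] {x : A} (hx : x ∈ IsLocalRing.maximalIdeal A) : IsNilpotent x := by
  rwa [← Ring.KrullDimLE.nilradical_eq_maximalIdeal] at hx

theorem integral_logDeriv_eq_two_pi_I_valuation_general
    (A : Type*) [NormedCommRing A] [NormedAlgebra ℂ A] [FiniteDimensional ℂ A]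
    [IsLocalRing A]
    (ε : ℝ) (hε : 0 < ε) (ν : ℤ) (a₀ : Aˣ) (N M : ℕ)
    (aneg : Fin N → A) (apos : Fin M → A)
    (hneg : ∀ j, aneg j ∈ IsLocalRing.maximalIdeal A)
    (hpos : ∀ j, apos j ∈ IsLocalRing.maximalIdeal A)
    (h : ℝ → A)
    (hdef : ∀ t : ℝ, h t =
      (a₀ : A) * algebraMap ℂ A (circlePath ε t ^ ν) *
        (∏ j : Fin N, (1 - aneg j * algebraMap ℂ A (circlePath ε t ^ (-(j : ℤ) - 1)))) *
        ∏ j : Fin M, (1 - apos j * algebraMap ℂ A (circlePath ε t ^ ((j : ℕ) + 1)))) :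
    ∫ t in (0 : ℝ)..1, deriv h t * Ring.inverse (h t) =
      algebraMap ℂ A (2 * Real.pi * Complex.I * (ν : ℂ)) := by
  have : IsArtinianRing A := isArtinian_of_tower ℂ inferInstance
  have : CompleteSpace A := FiniteDimensional.complete ℂ A
  choose nneg hnneg using fun j => IsLocalRing.isNilpotent_of_mem_maximalIdeal (hneg j)
  choose npos hnpos using fun j => IsLocalRing.isNilpotent_of_mem_maximalIdeal (hpos j)
  have hh : h = (fun _ => (a₀ : A)) * (fun t => algebraMap ℂ A (circlePath ε t ^ ν)) *
      (∏ j, fun t => 1 - aneg j * algebraMap ℂ A (circlePath ε t ^ (-(j : ℤ) - 1))) *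
      ∏ j : Fin M, fun t =>
        1 - apos j * algebraMap ℂ A (circlePath ε t ^ (((j : ℕ) : ℤ) + 1)) := by
    funext t
    simp only [hdef, Pi.mul_apply, prod_apply]
    norm_cast
  have hlog := (((isLogOf_const (a₀ : A)).mul (isLogOf_circlePath_zpow ε ν).algebraMap_comp).mul
    (IsLogOf.finset_prod univ fun j _ =>
      isLogOf_one_sub_mul_circlePath_zpow (hnneg j) ε (-(j : ℤ) - 1))).mul
    (IsLogOf.finset_prod univ fun j _ =>
      isLogOf_one_sub_mul_circlePath_zpow (hnpos j) ε (((j : ℕ) : ℤ) + 1))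
  have hunit (t : ℝ) : IsUnit (h t) := by
    rw [hdef]
    refine ((a₀.isUnit.mul ?_).mul (IsUnit.prod_univ_iff.2 fun j => ?_)).mul
      (IsUnit.prod_univ_iff.2 fun j => ?_)
    · exact (isUnit_iff_ne_zero.2 (zpow_ne_zero ν (circlePath_ne_zero hε.ne' t))).map _
    · exact ((Commute.all _ _).isNilpotent_mul_right ⟨_, hnneg j⟩).isUnit_one_sub
    · exact ((Commute.all _ _).isNilpotent_mul_right ⟨_, hnpos j⟩).isUnit_one_sub
  rw [← hh] at hlog
  rw [hlog.integral_deriv_mul_inverse hunit]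
  simp [circlePath_one]

/-- Let `A` be a finite-dimensional commutative local `ℂ`-algebra (normed `ℂ`-algebra)
with residue field `ℂ`, `γ (t) = ε e^{2πit}`, and
`h (t) = a₀ γ(t)^ν ∏_{j=1}^{N} (1 − a_{−j} γ(t)^{−j}) ∏_{j=1}^{M} (1 − a_j γ(t)^{j})`
with `a₀ ∈ Aˣ` and all `a_{±j}` in the maximal ideal (hence nilpotent, so each factor is
invertible).  Then `∫_0^1 h'(t) h(t)⁻¹ dt = 2πi ν`. -/
theorem integral_logDeriv_eq_two_pi_I_valuation
    (A : Type*) [NormedCommRing A] [NormedAlgebra ℂ A] [FiniteDimensional ℂ A]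
    [IsLocalRing A]
    (hres : Function.Bijective ((IsLocalRing.residue A).comp (algebraMap ℂ A)))
    (ε : ℝ) (hε : 0 < ε) (ν : ℤ) (a₀ : Aˣ) (N M : ℕ)
    (aneg : Fin N → A) (apos : Fin M → A)
    (hneg : ∀ j, aneg j ∈ IsLocalRing.maximalIdeal A)
    (hpos : ∀ j, apos j ∈ IsLocalRing.maximalIdeal A)
    (h : ℝ → A)
    (hdef : ∀ t : ℝ, h t =
      (a₀ : A) * algebraMap ℂ A (circlePath ε t ^ ν) *
        (∏ j : Fin N, (1 - aneg j * algebraMap ℂ A (circlePath ε t ^ (-(j : ℤ) - 1)))) *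
        ∏ j : Fin M, (1 - apos j * algebraMap ℂ A (circlePath ε t ^ ((j : ℕ) + 1)))) :
    ∫ t in (0 : ℝ)..1, deriv h t * Ring.inverse (h t) =
      algebraMap ℂ A (2 * Real.pi * Complex.I * (ν : ℂ)) :=
  integral_logDeriv_eq_two_pi_I_valuation_general A ε hε ν a₀ N M aneg apos hneg hpos h hdef
end

section
/- Let A be a finite-dimensional commutative local ℂ-algebra with maximal ideal m and residue field ℂ, regarded as a normed ℂ-algebra, and let f : [0,1] → Aˣ be a C¹ loop, i.e. f(0) = f(1). Then there exists an integer n such that ∫_0^1 f'(t)·f(t)⁻¹ dt = 2πi·n. -/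
/-!
Put `F(u) = ∫_0^u f' f⁻¹`. Then `exp (-F) * f` has derivative zero, so `exp (F 1) * f 0 = f 1`,
and the loop condition gives `exp (F 1) = 1`. To solve `exp x = 1` in `A`, write
`x = c + y` with `c ∈ ℂ` and `y ∈ m`, which is nilpotent because `A` is Artinian. Then
`exp y ≡ 1 mod m`, so reducing modulo `m` gives `exp c = 1`, i.e. `c ∈ 2πiℤ`; finally `exp y = 1`
forces `y = 0`, since `exp y - 1 = y * u` with `u ≡ 1 mod y` a unit.
-/

open MeasureTheory intervalIntegral Set

section NilpotentExp

variable {A : Type*} [CommRing A] [Algebra ℚ A] [TopologicalSpace A] [IsTopologicalRing A]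

theorem IsNilpotent.exists_exp_sub_one_eq_mul {m : A} (hm : IsNilpotent m) :
    ∃ v : A, NormedSpace.exp m - 1 = m * (1 + m * v) := by
  obtain ⟨k, hk⟩ := hm
  refine ⟨∑ j ∈ Finset.range k, ((j + 2).factorial : ℚ)⁻¹ • m ^ j, ?_⟩
  have hsum : NormedSpace.exp m = ∑ j ∈ Finset.range (k + 2), (j.factorial : ℚ)⁻¹ • m ^ j := by
    rw [NormedSpace.exp_eq_tsum_rat]
    refine tsum_eq_sum fun j hj ↦ ?_
    rw [pow_eq_zero_of_le (by simp only [Finset.mem_range, not_lt] at hj; omega) hk, smul_zero]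
  have htail : m * (m * ∑ j ∈ Finset.range k, ((j + 2).factorial : ℚ)⁻¹ • m ^ j) =
      ∑ j ∈ Finset.range k, ((j + 2).factorial : ℚ)⁻¹ • m ^ (j + 2) := by
    simp only [Finset.mul_sum, mul_smul_comm, ← pow_succ']
  rw [hsum, Finset.sum_range_succ', Finset.sum_range_succ', mul_add, htail]
  simp only [zero_add, Nat.factorial_one, Nat.cast_one, inv_one, pow_one, one_smul,
    Nat.factorial_zero, pow_zero, add_sub_cancel_right, mul_one]
  ring

theorem IsNilpotent.eq_zero_of_exp_eq_one {m : A} (hm : IsNilpotent m)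
    (h : NormedSpace.exp m = 1) : m = 0 := by
  obtain ⟨v, hv⟩ := hm.exists_exp_sub_one_eq_mul
  have hunit : IsUnit (1 + m * v) := (Commute.all m v).isNilpotent_mul_right hm |>.isUnit_one_add
  rw [h, sub_self, eq_comm] at hv
  exact hunit.mul_left_eq_zero.mp hv

end NilpotentExp

section LocalAlgebra

variable {K A : Type*} [Field K] [CommRing A] [IsLocalRing A] [Algebra K A]

theorem IsLocalRing.exists_sub_algebraMap_mem_maximalIdeal
    (hres : Function.Surjective ((IsLocalRing.residue A).comp (algebraMap K A))) (x : A) :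
    ∃ c : K, x - algebraMap K A c ∈ IsLocalRing.maximalIdeal A := by
  obtain ⟨c, hc⟩ := hres (IsLocalRing.residue A x)
  exact ⟨c, by rw [← IsLocalRing.residue_eq_zero_iff, map_sub, ← RingHom.comp_apply, hc, sub_self]⟩

end LocalAlgebra

open NormedSpace in
theorem exists_int_eq_of_exp_eq_one {A : Type*} [NormedCommRing A] [NormedAlgebra ℂ A]
    [CompleteSpace A] [IsLocalRing A] [Ring.KrullDimLE 0 A]
    (hres : Function.Bijective ((IsLocalRing.residue A).comp (algebraMap ℂ A)))
    {x : A} (h : exp x = 1) :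
    ∃ n : ℤ, x = algebraMap ℂ A (2 * Real.pi * Complex.I * n) := by
  let _ : NormedAlgebra ℚ A := NormedAlgebra.restrictScalars ℚ ℂ A
  obtain ⟨c, hy⟩ := IsLocalRing.exists_sub_algebraMap_mem_maximalIdeal hres.surjective x
  set y := x - algebraMap ℂ A c
  have hy_nil : IsNilpotent y := Ring.KrullDimLE.isNilpotent_iff_mem_maximalIdeal.mpr hy
  have hsplit : exp x = algebraMap ℂ A (Complex.exp c) * exp y := by
    rw [← sub_add_cancel x (algebraMap ℂ A c), exp_add, Complex.exp_eq_exp_ℂ, algebraMap_exp_comm,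
      mul_comm]
  have hy_res : IsLocalRing.residue A (exp y) = 1 := by
    obtain ⟨v, hv⟩ := hy_nil.exists_exp_sub_one_eq_mul
    rw [← sub_eq_zero, ← map_one (IsLocalRing.residue A), ← map_sub, hv,
      IsLocalRing.residue_eq_zero_iff]
    exact Ideal.mul_mem_right _ _ hy
  have hc : Complex.exp c = 1 := hres.injective <| by
    simpa [hsplit, hy_res] using congrArg (IsLocalRing.residue A) h
  obtain ⟨n, hn⟩ := Complex.exp_eq_one_iff.mp hc
  have hy0 : y = 0 := hy_nil.eq_zero_of_exp_eq_one (by rwa [hsplit, hc, map_one, one_mul] at h)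
  exact ⟨n, by rw [sub_eq_zero.mp hy0, hn, mul_comm]⟩

theorem ContinuousOn.ring_inverse {X R : Type*} [TopologicalSpace X] [NormedRing R]
    [HasSummableGeomSeries R] {f : X → R} {s : Set X} (hf : ContinuousOn f s)
    (hunit : ∀ x ∈ s, IsUnit (f x)) : ContinuousOn (fun x ↦ Ring.inverse (f x)) s := by
  intro x hx
  obtain ⟨u, hu⟩ := hunit x hx
  exact (hu ▸ NormedRing.inverse_continuousAt u).comp_continuousWithinAt (hf x hx)

theorem ContinuousOn.hasDerivWithinAt_integral_Icc {E : Type*} [NormedAddCommGroup E]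
    [NormedSpace ℝ E] [CompleteSpace E] {g : ℝ → E} {a b t : ℝ}
    (hg : ContinuousOn g (Icc a b)) (ht : t ∈ Icc a b) :
    HasDerivWithinAt (fun u ↦ ∫ s in a..u, g s) (g t) (Icc a b) t := by
  have : Fact (t ∈ Icc a b) := ⟨ht⟩
  exact integral_hasDerivWithinAt_right (s := Icc a b) (t := Icc a b)
    ((hg.mono (Icc_subset_Icc_right ht.2)).intervalIntegrable_of_Icc ht.1)
    (hg.stronglyMeasurableAtFilter_nhdsWithin measurableSet_Icc t) (hg t ht)

theorem HasDerivWithinAt.normedSpace_exp {A : Type*} [NormedCommRing A] [NormedAlgebra ℝ A]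
    [CompleteSpace A] {F : ℝ → A} {F' : A} {s : Set ℝ} {t : ℝ} (hF : HasDerivWithinAt F F' s t) :
    HasDerivWithinAt (fun u ↦ NormedSpace.exp (F u)) (NormedSpace.exp (F t) * F') s t := by
  simpa [Function.comp_def] using (hasFDerivAt_exp (𝕂 := ℝ)).comp_hasDerivWithinAt t hF

theorem eq_of_hasDerivWithinAt_zero_Icc {E : Type*} [NormedAddCommGroup E] [NormedSpace ℝ E]
    {h : ℝ → E} {a b : ℝ} (hab : a ≤ b)
    (hderiv : ∀ t ∈ Icc a b, HasDerivWithinAt h 0 (Icc a b) t) : h b = h a :=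
  constant_of_has_deriv_right_zero (fun t ht ↦ (hderiv t ht).continuousWithinAt)
    (fun t ht ↦ (hderiv t (Ico_subset_Icc_self ht)).mono_of_mem_nhdsWithin
      (Icc_mem_nhdsGE_of_mem ht)) b (right_mem_Icc.mpr hab)

open NormedSpace in
theorem exp_integral_mul_inverse_mul {A : Type*} [NormedCommRing A] [NormedAlgebra ℝ A]
    [CompleteSpace A] {f f' : ℝ → A} {a b : ℝ} (hab : a ≤ b)
    (hf : ∀ t ∈ Icc a b, IsUnit (f t)) (hf' : ContinuousOn f' (Icc a b))
    (hderiv : ∀ t ∈ Icc a b, HasDerivWithinAt f (f' t) (Icc a b) t) :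
    exp (∫ t in a..b, f' t * Ring.inverse (f t)) * f a = f b := by
  set F : ℝ → A := fun u ↦ ∫ t in a..u, f' t * Ring.inverse (f t)
  have hg : ContinuousOn (fun t ↦ f' t * Ring.inverse (f t)) (Icc a b) :=
    hf'.mul (ContinuousOn.ring_inverse (fun t ht ↦ (hderiv t ht).continuousWithinAt) hf)
  -- `exp (-F) * f` has derivative `exp (-F) * (f' - f' f⁻¹ f) = 0`.
  have hconst : ∀ t ∈ Icc a b, HasDerivWithinAt (fun u ↦ exp (-F u) * f u) 0 (Icc a b) t := by
    intro t ht
    refine ((hg.hasDerivWithinAt_integral_Icc ht).neg.normedSpace_exp.mul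
      (hderiv t ht)).congr_deriv ?_
    linear_combination -(exp (-F t) * f' t) * Ring.inverse_mul_cancel _ (hf t ht)
  let _ : NormedAlgebra ℚ A := NormedAlgebra.restrictScalars ℚ ℝ A
  have hba := eq_of_hasDerivWithinAt_zero_Icc hab hconst
  simp only [F, integral_same, neg_zero, exp_zero, one_mul] at hba
  rw [← hba, ← mul_assoc, ← exp_add, add_neg_cancel, exp_zero, one_mul]

/-- Let `A` be a finite-dimensional commutative local `ℂ`-algebra (normed `ℂ`-algebra)
with residue field `ℂ`, and let `f : [0,1] → Aˣ` be a C¹ loop (`f 0 = f 1`) into the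
units of `A`.  Then `∫_0^1 f'(t) f(t)⁻¹ dt = 2πi n` for some integer `n`. -/
theorem integral_logDeriv_loop_eq_two_pi_I_int
    (A : Type*) [NormedCommRing A] [NormedAlgebra ℂ A] [FiniteDimensional ℂ A]
    [IsLocalRing A]
    (hres : Function.Bijective ((IsLocalRing.residue A).comp (algebraMap ℂ A)))
    (f f' : ℝ → A)
    (hf : ∀ t ∈ Set.Icc (0 : ℝ) 1, IsUnit (f t))
    (hf' : ContinuousOn f' (Set.Icc 0 1))
    (hderiv : ∀ t ∈ Set.Icc (0 : ℝ) 1, HasDerivWithinAt f (f' t) (Set.Icc 0 1) t)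
    (hloop : f 0 = f 1) :
    ∃ n : ℤ, (∫ t in (0 : ℝ)..1, f' t * Ring.inverse (f t)) =
      algebraMap ℂ A (2 * Real.pi * Complex.I * (n : ℂ)) := by
  have : CompleteSpace A := FiniteDimensional.complete ℂ A
  have : IsArtinianRing A := IsArtinianRing.of_finite ℂ A
  let _ : NormedAlgebra ℝ A := NormedAlgebra.restrictScalars ℝ ℂ A
  have hexp := exp_integral_mul_inverse_mul zero_le_one hf hf' hderiv
  refine exists_int_eq_of_exp_eq_one hres <|
    (hf 0 (left_mem_Icc.mpr zero_le_one)).mul_right_cancel ?_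
  rw [hexp, one_mul, hloop]
end
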